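/- arXiv:1209.4985 — 7 statements merged into one kernel-verified Lean document; each statement's English description precedes it below -/
import Mathlib

section
/- For every real 0 < ε ≤ 1 and all integers k, ℓ, q with k ≥ 2 and ℓ, q ≥ 1 there exists an integer n with the following property: if N is a finite subset of ℕ with |N| ≥ n and F is a family of subsets of [k]^{<ℕ} with |F| = q, then there exists a subset L of N with |L| = ℓ such that F is (ε, L)-regular. -/
/-- A word over `k`: a finite sequence with values in `[k]`. -/
abbrev Word (k : ℕ) := List (Fin k)

/-- The density `dens_{[k]^n}(A) = |A ∩ [k]^n| / k^n`. -/
noncomputable def dens (k n : ℕ) (A : Set (Word k)) : ℝ :=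
  (Set.ncard {x ∈ A | x.length = n} : ℝ) / (k : ℝ) ^ n

/-- The density, in `[k]^{{0,…,n-1} ∖ I}`, of the section of `A ∩ [k]^n` at the located
word `y ∈ [k]^I` (a located word on `I` is encoded by a function `ℕ → Fin k`, only the
values on `I` being relevant): namely
`|{x ∈ A : |x| = n and x(i) = y(i) for all i ∈ I}| / k^{n - |I|}`. -/
noncomputable def secDens (k n : ℕ) (I : Finset ℕ) (y : ℕ → Fin k) (A : Set (Word k)) : ℝ :=
  (Set.ncard {x ∈ A | x.length = n ∧ ∀ i ∈ I, x[i]? = some (y i)} : ℝ) /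
    (k : ℝ) ^ (n - I.card)

/-- A family `F` of subsets of `[k]^{<ℕ}` is `(ε, L)`-regular. -/
def RegularFamily (k : ℕ) (ε : ℝ) (L : Finset ℕ) (F : Finset (Set (Word k))) : Prop :=
  ∀ A ∈ F, ∀ n ∈ L, ∀ I : Finset ℕ, I ⊆ L.filter (· < n) → ∀ y : ℕ → Fin k,
    |secDens k n I y A - dens k n A| ≤ ε

/-!
Fix `A ⊆ [k]^n` and write `1_A` for its indicator. For `I ⊆ {0,…,n-1}` the section densities
of `A` over `I`, as a function of the located word, are the conditional expectation
`E[1_A | x_I]`. Functions of disjoint sets of coordinates are independent, so the deviations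
`E[1_A | x_I] - E[1_A]` are pairwise orthogonal for pairwise disjoint `I`, and Bessel's inequality
bounds the number of pairwise disjoint `ε`-irregular sets `I` with `|I| ≤ ℓ` by `k^ℓ / ε²`
(an irregular `I` contributes at least `ε² k^(n-|I|)` to `‖1_A - E[1_A]‖² ≤ k^n`).
Hence the irregular sets have a transversal `T(A, n)` with `|T(A, n)| ≤ ℓ ⌈k^ℓ / ε²⌉`.
Picking `L ⊆ N` greedily from the top and discarding, at each chosen `n`, the union of the
`T(A, n)` over `A ∈ F`, every `I ⊆ L` below `n` misses `T(A, n)` and is therefore regular.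
-/

open Finset

namespace RegularityLemma

section Transversal

variable {α : Type*} [DecidableEq α]

/-- The transversal is the union of a maximal pairwise disjoint subfamily of `P`. -/
lemma exists_transversal {ℓ : ℕ} (D : ℕ) (P : Finset α → Prop) (hne : ∀ s, P s → s.Nonempty)
    (hcard : ∀ s, P s → #s ≤ ℓ)
    (hD : ∀ 𝔉 : Finset (Finset α), (∀ s ∈ 𝔉, P s) → (𝔉 : Set (Finset α)).PairwiseDisjoint id →
      #𝔉 ≤ D) :
    ∃ T : Finset α, #T ≤ ℓ * D ∧ ∀ s, P s → (s ∩ T).Nonempty := by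
  induction D generalizing P with
  | zero =>
    refine ⟨∅, by simp, fun s hs => absurd (hD {s} (by simpa using hs) (by simp)) (by simp)⟩
  | succ D ih =>
    by_cases hP : ∃ s₀, P s₀
    swap
    · exact ⟨∅, by simp, fun s hs => absurd ⟨s, hs⟩ hP⟩
    obtain ⟨s₀, hs₀⟩ := hP
    obtain ⟨T, hTcard, hT⟩ := ih (fun s => P s ∧ Disjoint s s₀) (fun s hs => hne s hs.1)
      (fun s hs => hcard s hs.1) fun 𝔉 h𝔉P h𝔉 => by
        have hs₀𝔉 : s₀ ∉ 𝔉 := fun h => (hne s₀ hs₀).ne_empty (disjoint_self.1 (h𝔉P s₀ h).2)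
        have := hD (insert s₀ 𝔉) (by simpa [hs₀] using fun s hs => (h𝔉P s hs).1)
          (by simpa using h𝔉.insert fun s hs _ => (h𝔉P s hs).2.symm)
        rw [card_insert_of_notMem hs₀𝔉] at this
        omega
    refine ⟨T ∪ s₀, ?_, fun s hs => ?_⟩
    · rw [mul_add_one]
      exact (card_union_le _ _).trans (add_le_add hTcard (hcard s₀ hs₀))
    · by_cases hd : Disjoint s s₀
      · exact (hT s ⟨hs, hd⟩).mono (inter_subset_inter_left subset_union_left)
      · obtain ⟨a, has, has₀⟩ := not_disjoint_iff.1 hd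
        exact ⟨a, mem_inter.2 ⟨has, mem_union_right _ has₀⟩⟩

lemma exists_subset_card_eq_forall_notMem {β : Type*} [LinearOrder β] {m : ℕ}
    (T : β → Finset β) (hT : ∀ b, #(T b) ≤ m) (ℓ : ℕ) (s : Finset β) (hs : ℓ * (m + 1) ≤ #s) :
    ∃ L ⊆ s, #L = ℓ ∧ ∀ b ∈ L, ∀ a ∈ L, a < b → a ∉ T b := by
  induction ℓ generalizing s with
  | zero => exact ⟨∅, empty_subset _, rfl, by simp⟩
  | succ ℓ ih =>
    have hs₀ : s.Nonempty := card_pos.1 (by nlinarith)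
    set b := s.max' hs₀
    have hb : b ∈ s := s.max'_mem hs₀
    obtain ⟨L, hLs, hLcard, hL⟩ := ih ((s.erase b) \ T b) (by
      have := le_card_sdiff (T b) (s.erase b)
      rw [card_erase_of_mem hb] at this
      have := hT b
      rw [add_mul] at hs
      omega)
    have hLs' : L ⊆ s.erase b := hLs.trans sdiff_subset
    have hbL : b ∉ L := fun h => notMem_erase b s (hLs' h)
    refine ⟨insert b L, insert_subset hb (hLs'.trans (erase_subset b s)),
      by rw [card_insert_of_notMem hbL, hLcard], fun c hc a ha hac => ?_⟩
    rcases mem_insert.1 hc with rfl | hcL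
    · rcases mem_insert.1 ha with rfl | haL
      · exact absurd hac (lt_irrefl _)
      · exact (mem_sdiff.1 (hLs haL)).2
    · have hcb : c ≤ b := s.le_max' c (mem_of_mem_erase (hLs' hcL))
      rcases mem_insert.1 ha with rfl | haL
      · exact absurd (hac.trans_le hcb) (lt_irrefl _)
      · exact hL c hcL a haL hac

end Transversal

section Mean

variable {ι α : Type*} [Fintype ι] [DecidableEq ι] [Fintype α]

noncomputable def mean (f : (ι → α) → ℝ) : ℝ :=
  (∑ x, f x) / (Fintype.card α : ℝ) ^ Fintype.card ι

variable {I J : Finset ι}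

/-- Swapping the `I`-coordinates of a pair `(x, z)` turns `F x * G z` into `F x * G x`. -/
lemma sum_mul_mul_card_of_disjoint (hIJ : Disjoint I J) {F G : (ι → α) → ℝ}
    (hF : DependsOn F I) (hG : DependsOn G J) :
    (∑ x, F x * G x) * Fintype.card (ι → α) = (∑ x, F x) * ∑ x, G x := by
  let σ : (ι → α) × (ι → α) → (ι → α) × (ι → α) := fun p =>
    (I.piecewise p.1 p.2, I.piecewise p.2 p.1)
  have hσ : Function.Involutive σ := fun p => by
    ext i <;> by_cases hi : i ∈ I <;> simp [σ, hi]
  have hFG : ∀ p, F (σ p).1 * G (σ p).2 = F p.1 * G p.1 := fun p => by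
    congr 1
    · exact hF fun i hi => by simp [σ, mem_coe.1 hi]
    · exact hG fun j hj => by simp [σ, disjoint_right.1 hIJ (mem_coe.1 hj)]
  calc (∑ x, F x * G x) * Fintype.card (ι → α)
      = ∑ p : (ι → α) × (ι → α), F p.1 * G p.1 := by
        rw [Fintype.sum_prod_type, sum_mul]
        simp [mul_comm]
    _ = ∑ p : (ι → α) × (ι → α), F p.1 * G p.2 := by
        simp_rw [← hFG]
        exact Equiv.sum_comp (hσ.toPerm σ) fun p : (ι → α) × (ι → α) => F p.1 * G p.2
    _ = (∑ x, F x) * ∑ x, G x := by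
        rw [sum_mul_sum, Fintype.sum_prod_type]

variable [Nonempty α]

lemma sum_sub_mean (f : (ι → α) → ℝ) : ∑ x, (f x - mean f) = 0 := by
  have : (Fintype.card α : ℝ) ^ Fintype.card ι ≠ 0 := by positivity
  simp only [mean, sum_sub_distrib, sum_const, card_univ, Fintype.card_fun, nsmul_eq_mul,
    Nat.cast_pow]
  field_simp
  ring

lemma mean_mem_Icc {f : (ι → α) → ℝ} (hf : ∀ x, f x ∈ Set.Icc 0 1) : mean f ∈ Set.Icc 0 1 := by
  have hc : (0 : ℝ) < (Fintype.card α : ℝ) ^ Fintype.card ι := by positivity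
  refine ⟨div_nonneg (sum_nonneg fun x _ => (hf x).1) hc.le, div_le_one_of_le₀ ?_ hc.le⟩
  simpa [Fintype.card_fun] using sum_le_card_nsmul univ f 1 fun x _ => (hf x).2

end Mean

section FiberAverage

variable {ι α : Type*} [Fintype ι] [DecidableEq ι] [Fintype α] [DecidableEq α]

def fiber (I : Finset ι) (x : ι → α) : Finset (ι → α) :=
  {x' | ∀ i ∈ I, x' i = x i}

noncomputable def fiberAvg (I : Finset ι) (f : (ι → α) → ℝ) (x : ι → α) : ℝ :=
  (∑ x' ∈ fiber I x, f x') / (Fintype.card α : ℝ) ^ (Fintype.card ι - #I)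

variable {I J : Finset ι} {x y : ι → α}

@[simp]
lemma mem_fiber {x' : ι → α} : x' ∈ fiber I x ↔ ∀ i ∈ I, x' i = x i := by
  simp [fiber]

lemma mem_fiber_comm {x' : ι → α} : x' ∈ fiber I x ↔ x ∈ fiber I x' := by
  simp only [mem_fiber]
  exact forall₂_congr fun _ _ => eq_comm

lemma fiber_congr (h : ∀ i ∈ I, x i = y i) : fiber I x = fiber I y := by
  ext x'
  simp only [mem_fiber]
  exact forall₂_congr fun i hi => by rw [h i hi]

lemma card_fiber (I : Finset ι) (x : ι → α) :
    #(fiber I x) = Fintype.card α ^ (Fintype.card ι - #I) := by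
  have : fiber I x = Fintype.piFinset fun i => if i ∈ I then {x i} else univ := by
    ext x'
    simp only [mem_fiber, Fintype.mem_piFinset]
    refine forall_congr' fun i => ?_
    split_ifs with hi <;> simp [hi]
  simp only [this, Fintype.card_piFinset, apply_ite card, card_singleton, card_univ, prod_ite,
    prod_const_one, one_mul, prod_const, ← card_compl]
  congr 2
  ext i
  simp

lemma fiberAvg_congr (f : (ι → α) → ℝ) (h : ∀ i ∈ I, x i = y i) :
    fiberAvg I f x = fiberAvg I f y := by
  rw [fiberAvg, fiberAvg, fiber_congr h]

lemma dependsOn_fiberAvg (I : Finset ι) (f : (ι → α) → ℝ) : DependsOn (fiberAvg I f) I :=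
  fun _ _ h => fiberAvg_congr f fun i hi => h i (mem_coe.2 hi)

lemma fiberAvg_empty (f : (ι → α) → ℝ) (x : ι → α) : fiberAvg ∅ f x = mean f := by
  have : fiber ∅ x = univ := by ext; simp
  simp [fiberAvg, mean, this]

variable [Nonempty α]

lemma fiberAvg_sub_const (f : (ι → α) → ℝ) (c : ℝ) (x : ι → α) :
    fiberAvg I (fun x' => f x' - c) x = fiberAvg I f x - c := by
  have : (Fintype.card α : ℝ) ^ (Fintype.card ι - #I) ≠ 0 := by positivity
  simp only [fiberAvg, sum_sub_distrib, sum_const, card_fiber, nsmul_eq_mul, Nat.cast_pow]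
  field_simp

/-- `fiberAvg I` is the orthogonal projection onto the functions depending only on `I`. -/
lemma sum_fiberAvg_mul (f : (ι → α) → ℝ) {g : (ι → α) → ℝ} (hg : DependsOn g I) :
    ∑ x, fiberAvg I f x * g x = ∑ x, f x * g x := by
  have : (Fintype.card α : ℝ) ^ (Fintype.card ι - #I) ≠ 0 := by positivity
  calc ∑ x, fiberAvg I f x * g x
      = (∑ x, ∑ x' ∈ fiber I x, f x' * g x') / (Fintype.card α : ℝ) ^ (Fintype.card ι - #I) := by
        rw [sum_div]
        refine sum_congr rfl fun x _ => ?_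
        rw [fiberAvg, div_mul_eq_mul_div, sum_mul]
        congr 1
        refine sum_congr rfl fun x' hx' => ?_
        rw [hg fun i hi => (mem_fiber.1 hx' i (mem_coe.1 hi)).symm]
    _ = (∑ x', ∑ _x ∈ fiber I x', f x' * g x') / (Fintype.card α : ℝ) ^ (Fintype.card ι - #I) := by
        rw [sum_comm' (t' := univ) (s' := fiber I) fun x x' => by
          simp only [mem_univ, true_and, and_true]
          exact mem_fiber_comm]
    _ = ∑ x, f x * g x := by
        simp only [sum_const, card_fiber, nsmul_eq_mul, Nat.cast_pow, ← mul_sum]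
        field_simp

lemma sum_fiberAvg (f : (ι → α) → ℝ) : ∑ x, fiberAvg I f x = ∑ x, f x := by
  simpa using sum_fiberAvg_mul (I := I) f (g := fun _ => 1) fun _ _ _ => rfl

lemma sum_fiberAvg_mul_fiberAvg_of_disjoint {g : (ι → α) → ℝ} (hg : ∑ x, g x = 0)
    (hIJ : Disjoint I J) : ∑ x, fiberAvg I g x * fiberAvg J g x = 0 := by
  have h := sum_mul_mul_card_of_disjoint hIJ (dependsOn_fiberAvg I g) (dependsOn_fiberAvg J g)
  rw [sum_fiberAvg, hg, zero_mul] at h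
  exact (mul_eq_zero.1 h).resolve_right (Nat.cast_ne_zero.2 Fintype.card_ne_zero)

/-- Bessel's inequality for the mutually orthogonal projections `fiberAvg I`, `I ∈ 𝔉`. -/
lemma sum_sum_fiberAvg_sq_le {g : (ι → α) → ℝ} (hg : ∑ x, g x = 0) {𝔉 : Finset (Finset ι)}
    (h𝔉 : (𝔉 : Set (Finset ι)).PairwiseDisjoint id) :
    ∑ I ∈ 𝔉, ∑ x, fiberAvg I g x ^ 2 ≤ ∑ x, g x ^ 2 := by
  set h : (ι → α) → ℝ := fun x => ∑ I ∈ 𝔉, fiberAvg I g x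
  have hgh : ∑ x, g x * h x = ∑ I ∈ 𝔉, ∑ x, fiberAvg I g x ^ 2 := by
    simp only [h, mul_sum]
    rw [sum_comm]
    refine sum_congr rfl fun I _ => ?_
    simp only [sq, sum_fiberAvg_mul g (dependsOn_fiberAvg I g)]
  have hhh : ∑ x, h x ^ 2 = ∑ I ∈ 𝔉, ∑ x, fiberAvg I g x ^ 2 := by
    simp only [h, sq, sum_mul_sum]
    rw [sum_comm]
    refine sum_congr rfl fun I hI => ?_
    rw [sum_comm, sum_eq_single I]
    · intro J hJ hJI
      exact sum_fiberAvg_mul_fiberAvg_of_disjoint hg (h𝔉 hI hJ hJI.symm)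
    · exact fun hI' => absurd hI hI'
  have hexp : ∑ x, (g x - h x) ^ 2 = ∑ x, g x ^ 2 - 2 * ∑ x, g x * h x + ∑ x, h x ^ 2 := by
    simp only [sub_sq, sum_add_distrib, sum_sub_distrib, mul_sum, mul_assoc]
  nlinarith [sum_nonneg fun x (_ : x ∈ univ) => sq_nonneg (g x - h x)]

lemma sq_mul_le_sum_fiberAvg_sq {g : (ι → α) → ℝ} {ε : ℝ} (hε : 0 ≤ ε)
    (hy : ε ≤ |fiberAvg I g y|) :
    ε ^ 2 * Fintype.card α ^ (Fintype.card ι - #I) ≤ ∑ x, fiberAvg I g x ^ 2 := by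
  have hconst : ∀ x ∈ fiber I y, fiberAvg I g x ^ 2 = fiberAvg I g y ^ 2 := fun x hx => by
    rw [fiberAvg_congr g (mem_fiber.1 hx)]
  calc ε ^ 2 * Fintype.card α ^ (Fintype.card ι - #I)
      ≤ #(fiber I y) * fiberAvg I g y ^ 2 := by
        rw [card_fiber, mul_comm, Nat.cast_pow]
        gcongr _ * ?_
        simpa [sq_abs] using pow_le_pow_left₀ hε hy 2
    _ = ∑ x ∈ fiber I y, fiberAvg I g x ^ 2 := by
        rw [sum_congr rfl hconst, sum_const, nsmul_eq_mul]
    _ ≤ ∑ x, fiberAvg I g x ^ 2 :=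
        sum_le_sum_of_subset_of_nonneg (subset_univ _) fun _ _ _ => sq_nonneg _

lemma card_mul_sq_le_of_pairwiseDisjoint {f : (ι → α) → ℝ} (hf : ∀ x, f x ∈ Set.Icc 0 1)
    {ε : ℝ} (hε : 0 ≤ ε) {ℓ : ℕ} {𝔉 : Finset (Finset ι)}
    (h𝔉 : (𝔉 : Set (Finset ι)).PairwiseDisjoint id)
    (hirr : ∀ I ∈ 𝔉, #I ≤ ℓ ∧ ∃ y, ε < |fiberAvg I f y - mean f|) :
    #𝔉 * ε ^ 2 ≤ Fintype.card α ^ ℓ := by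
  set g : (ι → α) → ℝ := fun x => f x - mean f
  have hα : (1 : ℝ) ≤ Fintype.card α := Nat.one_le_cast.2 Fintype.card_pos
  have hg_sq : ∑ x, g x ^ 2 ≤ (Fintype.card α : ℝ) ^ Fintype.card ι := by
    have hm := mean_mem_Icc hf
    have : ∀ x, g x ^ 2 ≤ 1 := fun x => by
      have := hf x
      simp only [g, Set.mem_Icc] at this hm ⊢
      nlinarith
    simpa [Fintype.card_fun] using sum_le_card_nsmul univ _ 1 fun x _ => this x
  have hI : ∀ I ∈ 𝔉, ε ^ 2 * Fintype.card α ^ (Fintype.card ι - ℓ) ≤ ∑ x, fiberAvg I g x ^ 2 := by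
    intro I hI
    obtain ⟨hIℓ, y, hy⟩ := hirr I hI
    refine le_trans ?_ (sq_mul_le_sum_fiberAvg_sq hε (y := y) ?_)
    · gcongr
    · simpa only [g, fiberAvg_sub_const] using hy.le
  have hbessel := (card_nsmul_le_sum 𝔉 _ _ hI).trans
    ((sum_sum_fiberAvg_sq_le (sum_sub_mean f) h𝔉).trans hg_sq)
  have hsplit : (Fintype.card α : ℝ) ^ Fintype.card ι ≤
      Fintype.card α ^ ℓ * Fintype.card α ^ (Fintype.card ι - ℓ) := by
    rw [← pow_add]
    exact pow_le_pow_right₀ hα (by omega)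
  rw [nsmul_eq_mul, ← mul_assoc] at hbessel
  exact le_of_mul_le_mul_right (hbessel.trans hsplit) (by positivity)

lemma exists_transversal_irregular {f : (ι → α) → ℝ} (hf : ∀ x, f x ∈ Set.Icc 0 1)
    {ε : ℝ} (hε : 0 < ε) (ℓ : ℕ) :
    ∃ T : Finset ι, #T ≤ ℓ * ⌈(Fintype.card α : ℝ) ^ ℓ / ε ^ 2⌉₊ ∧
      ∀ I : Finset ι, #I ≤ ℓ → ∀ y, ε < |fiberAvg I f y - mean f| → (I ∩ T).Nonempty := by
  obtain ⟨T, hT, hTI⟩ := exists_transversal _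
    (fun I => #I ≤ ℓ ∧ ∃ y, ε < |fiberAvg I f y - mean f|)
    (fun I ⟨_, y, hy⟩ => nonempty_iff_ne_empty.2 fun hI => by
      simp [hI, fiberAvg_empty, hε.not_gt] at hy)
    (fun _ h => h.1) fun 𝔉 hirr h𝔉 => by
      have := card_mul_sq_le_of_pairwiseDisjoint hf hε.le h𝔉 hirr
      exact Nat.cast_le.1 (((le_div_iff₀ (by positivity)).2 this).trans (Nat.le_ceil _))
  exact ⟨T, hT, fun I hI y hy => hTI I ⟨hI, y, hy⟩⟩

end FiberAverage

section Words

variable {k : ℕ}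

open Classical in
noncomputable def levelIndicator (A : Set (Word k)) (n : ℕ) (x : Fin n → Fin k) : ℝ :=
  if List.ofFn x ∈ A then 1 else 0

lemma levelIndicator_mem_Icc (A : Set (Word k)) (n : ℕ) (x : Fin n → Fin k) :
    levelIndicator A n x ∈ Set.Icc 0 1 := by
  unfold levelIndicator
  split_ifs <;> simp

lemma ncard_setOf_length_eq (P : Word k → Prop) [DecidablePred P] (n : ℕ) :
    {w : Word k | w.length = n ∧ P w}.ncard = #{x : Fin n → Fin k | P (List.ofFn x)} := by
  have : {w : Word k | w.length = n ∧ P w} =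
      List.ofFn '' (({x | P (List.ofFn x)} : Finset (Fin n → Fin k)) : Set (Fin n → Fin k)) := by
    ext w
    simp only [Set.mem_ofPred_eq, coe_filter, mem_univ, true_and, Set.mem_image]
    constructor
    · rintro ⟨rfl, hw⟩
      exact ⟨w.get, by rwa [List.ofFn_get], List.ofFn_get w⟩
    · rintro ⟨x, hx, rfl⟩
      exact ⟨List.length_ofFn, hx⟩
  rw [this, Set.ncard_image_of_injective _ List.ofFn_injective, Set.ncard_coe_finset]

lemma dens_eq_mean (A : Set (Word k)) (n : ℕ) : dens k n A = mean (levelIndicator A n) := by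
  classical
  have : {x ∈ A | x.length = n} = {w : Word k | w.length = n ∧ w ∈ A} := by
    ext w; exact and_comm
  simp only [_root_.dens, mean, levelIndicator, sum_boole, Fintype.card_fin, this,
    ncard_setOf_length_eq (· ∈ A)]

lemma secDens_eq_fiberAvg (A : Set (Word k)) {n : ℕ} {I : Finset ℕ} (hI : ∀ i ∈ I, i < n)
    (y : ℕ → Fin k) :
    secDens k n I y A = fiberAvg (I.attachFin hI) (levelIndicator A n) (fun j => y j) := by
  classical
  have : {x ∈ A | x.length = n ∧ ∀ i ∈ I, x[i]? = some (y i)} =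
      {w : Word k | w.length = n ∧ (w ∈ A ∧ ∀ i ∈ I, w[i]? = some (y i))} := by
    ext w; simp only [Set.mem_ofPred_eq]; tauto
  simp only [secDens, fiberAvg, levelIndicator, sum_boole, Fintype.card_fin, card_attachFin, this,
    ncard_setOf_length_eq]
  congr 3
  ext x
  simp only [mem_filter, mem_univ, true_and, mem_fiber, mem_attachFin, List.getElem?_ofFn]
  rw [and_comm]
  refine and_congr_left' ⟨fun h j hj => ?_, fun h i hi => ?_⟩
  · simpa [j.isLt] using h j hj
  · simpa [hI i hi] using h ⟨i, hI i hi⟩ hi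

lemma exists_transversal_irregular_secDens [NeZero k] {ε : ℝ} (hε : 0 < ε) (ℓ : ℕ)
    (A : Set (Word k)) (n : ℕ) :
    ∃ T : Finset ℕ, #T ≤ ℓ * ⌈(k : ℝ) ^ ℓ / ε ^ 2⌉₊ ∧
      ∀ I : Finset ℕ, (hI : ∀ i ∈ I, i < n) → #I ≤ ℓ → ∀ y : ℕ → Fin k,
        ε < |secDens k n I y A - dens k n A| → (I ∩ T).Nonempty := by
  obtain ⟨T, hTcard, hT⟩ := exists_transversal_irregular (levelIndicator_mem_Icc A n) hε ℓ
  refine ⟨T.map Fin.valEmbedding, by simpa using hTcard, fun I hI hIℓ y hy => ?_⟩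
  rw [secDens_eq_fiberAvg A hI, dens_eq_mean] at hy
  obtain ⟨j, hj⟩ := hT (I.attachFin hI) (by simpa using hIℓ) _ hy
  rw [mem_inter, mem_attachFin] at hj
  exact ⟨j, mem_inter.2 ⟨hj.1, mem_map_of_mem _ hj.2⟩⟩

end Words

end RegularityLemma

theorem regularity_lemma_general (ε : ℝ) (hε0 : 0 < ε) (k ℓ q : ℕ)
    (hk : 2 ≤ k) :
    ∃ n : ℕ, ∀ N : Finset ℕ, n ≤ N.card → ∀ F : Finset (Set (Word k)), F.card = q →
      ∃ L : Finset ℕ, L ⊆ N ∧ L.card = ℓ ∧ RegularFamily k ε L F := by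
  classical
  have : NeZero k := ⟨by omega⟩
  set D := ℓ * ⌈(k : ℝ) ^ ℓ / ε ^ 2⌉₊
  choose T hTcard hT using RegularityLemma.exists_transversal_irregular_secDens (k := k) hε0 ℓ
  refine ⟨ℓ * (q * D + 1), fun N hN F hF => ?_⟩
  have hTF : ∀ n, #(F.biUnion (T · n)) ≤ q * D := fun n =>
    card_biUnion_le.trans (by simpa [hF] using sum_le_card_nsmul F _ D fun A _ => hTcard A n)
  obtain ⟨L, hLN, hLcard, hL⟩ := RegularityLemma.exists_subset_card_eq_forall_notMem _ hTF ℓ N hN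
  refine ⟨L, hLN, hLcard, fun A hA n hn I hI y => not_lt.1 fun hy => ?_⟩
  have hIL : I ⊆ L := hI.trans (filter_subset _ _)
  have hIn : ∀ i ∈ I, i < n := fun i hi => (mem_filter.1 (hI hi)).2
  obtain ⟨i, hi⟩ := hT A n I hIn (hLcard ▸ card_le_card hIL) y hy
  rw [mem_inter] at hi
  exact hL n hn i (hIL hi.1) (hIn i hi.1) (mem_biUnion.2 ⟨A, hA, hi.2⟩)

/-- The regularity lemma for subsets of `[k]^{<ℕ}`. -/
theorem regularity_lemma (ε : ℝ) (hε0 : 0 < ε) (hε1 : ε ≤ 1) (k ℓ q : ℕ)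
    (hk : 2 ≤ k) (hℓ : 1 ≤ ℓ) (hq : 1 ≤ q) :
    ∃ n : ℕ, ∀ N : Finset ℕ, n ≤ N.card → ∀ F : Finset (Set (Word k)), F.card = q →
      ∃ L : Finset ℕ, L ⊆ N ∧ L.card = ℓ ∧ RegularFamily k ε L F :=
  regularity_lemma_general ε hε0 k ℓ q hk
end

section
/- Let k, m, r ∈ ℕ with k ≥ 2 and m, r ≥ 1, and let g : ℕ → ℕ be a function such that g(n) = 0 for n < m−1 and, for every n ≥ m−1, every combinatorial subspace V of [k]^{<ℕ} of dimension at least g(n) has the property that every r-coloring of Subs_m(V) admits W ∈ Subs_{n+1}(V) with Subs_m(W) monochromatic. Then for all q, n ∈ ℕ with q ≥ 1 and n ≥ g^{(q)}(m) (the q-th iterate of g applied to m), for every n-dimensional Carlson–Simpson tree W of [k]^{<ℕ} and every r-coloring of Subtr_m(W), there exists U ∈ Subtr^{max}_{m+q}(W) such that any two S, T ∈ Subtr_m(U) with depth_U(S) = depth_U(T) have the same color. -/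
/-- A "possibly variable" letter sequence: `none` plays the role of the variable `v`. -/
abbrev VWord (k : ℕ) := List (Option (Fin k))

/-- Substitution of the letter `a` for every occurrence of the variable. -/
def subst {k : ℕ} (w : VWord k) (a : Fin k) : Word k := w.map (fun o => o.getD a)

/-- `w` is a left variable word: its leftmost letter is the variable `v`. -/
def IsLeftVar {k : ℕ} (w : VWord k) : Prop := w.head? = some none

/-- A Carlson–Simpson tree of `[k]^{<ℕ}`, given by its generating sequence:
a word `c` and left variable words `ws 0, …, ws (dim - 1)`. -/
structure CSTree (k : ℕ) where
  dim : ℕ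
  c : Word k
  ws : ℕ → VWord k
  dim_pos : 1 ≤ dim
  left : ∀ i < dim, IsLeftVar (ws i)

/-- The `n`-th level `W(n)` of a Carlson–Simpson tree
(`W(0) = {c}`, `W(n) = {c ⌢ w₀(a₀) ⌢ ⋯ ⌢ w_{n-1}(a_{n-1})}`). -/
def CSTree.level {k : ℕ} (W : CSTree k) (n : ℕ) : Set (Word k) :=
  {x | ∃ a : ℕ → Fin k, x = W.c ++ ((List.range n).map fun i => subst (W.ws i) (a i)).flatten}

/-- The underlying set of a Carlson–Simpson tree: the union of its levels `0, …, dim`. -/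
def CSTree.carrier {k : ℕ} (W : CSTree k) : Set (Word k) :=
  ⋃ n ∈ Finset.range (W.dim + 1), W.level n

/-- An `m`-variable word over `k`: a list over `Fin k ⊕ Fin m` (where `Sum.inr j` is the
variable `v_j`) in which every variable occurs and, for `i < j`, every occurrence of
`v_i` precedes every occurrence of `v_j`. -/
def IsMVarWord (k m : ℕ) (w : List (Fin k ⊕ Fin m)) : Prop :=
  (∀ j : Fin m, Sum.inr j ∈ w) ∧
  ∀ i j : Fin m, i < j → ∀ p q : Fin w.length,
    w.get p = Sum.inr i → w.get q = Sum.inr j → (p : ℕ) < (q : ℕ)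

/-- Substitution in an `m`-variable word. -/
def substM {k m : ℕ} (w : List (Fin k ⊕ Fin m)) (a : Fin m → Fin k) : Word k :=
  w.map (Sum.elim id a)

/-- `V` is an `m`-dimensional combinatorial subspace of `[k]^{<ℕ}`. -/
def IsSubspace (k m : ℕ) (V : Set (Word k)) : Prop :=
  ∃ w : List (Fin k ⊕ Fin m), IsMVarWord k m w ∧
    V = {x | ∃ a : Fin m → Fin k, x = substM w a}

/-!
An `m`-dimensional Carlson–Simpson tree is determined by its top level, and every combinatorial
subspace `X` of the top level `W(n)` of a tree contains the top level of a subtree of `W` of the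
same dimension: comparing `X` with `W(n)` block by block, each generating word of `W` receives a
constant letter or one variable of `X`, the variables in increasing order, and grouping the
blocks between first occurrences of consecutive variables yields the subtree. So, colouring each
subspace by the colour of the tree it is the top level of, the Graham–Rothschild bound `g`
yields inside any tree of dimension `≥ g(n)` an `(n + 1)`-dimensional subtree all of whose
`m`-dimensional subtrees with top level inside its top level have the same colour. Applying this
at dimensions `n = g^{(q-1)}(m), …, m` makes every level of depth `≥ m` of an
`(m + q)`-dimensional subtree `U` monochromatic in this sense, and word lengths show that an
`m`-dimensional subtree of `U` with top level in `U(i)` has depth `min i (dim U)`.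
-/

variable {k : ℕ}

theorem subst_length (w : VWord k) (a : Fin k) : (subst w a).length = w.length :=
  List.length_map _

theorem subst_map_some (u : Word k) (a : Fin k) : subst (u.map some) a = u := by
  simp [subst]

theorem subst_flatten (L : List (VWord k)) (a : Fin k) :
    subst L.flatten a = (L.map (subst · a)).flatten :=
  List.map_flatten

theorem IsLeftVar.exists_eq_cons {w : VWord k} (h : IsLeftVar w) : ∃ t, w = none :: t := by
  cases w with
  | nil => simp [IsLeftVar] at h
  | cons o t => simp_all [IsLeftVar]

theorem IsLeftVar.ne_nil {w : VWord k} (h : IsLeftVar w) : w ≠ [] := by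
  obtain ⟨t, rfl⟩ := h.exists_eq_cons
  exact List.cons_ne_nil _ _

theorem IsLeftVar.exists_subst_eq_cons {w : VWord k} (h : IsLeftVar w) (a : Fin k) :
    ∃ t, subst w a = a :: t := by
  obtain ⟨t, rfl⟩ := h.exists_eq_cons
  exact ⟨subst t a, rfl⟩

theorem eq_of_forall_append_subst_eq (hk : 2 ≤ k) {p p' : Word k} {u u' : VWord k}
    (hu : IsLeftVar u) (hu' : IsLeftVar u') (h : ∀ x, p ++ subst u x = p' ++ subst u' x) :
    p = p' := by
  have key : ∀ (p p' : Word k) (u u' : VWord k), IsLeftVar u' →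
      (∀ x, p ++ subst u x = p' ++ subst u' x) → p.length ≤ p'.length := by
    intro p p' u u' hu' h
    -- otherwise position `p'.length` holds a fixed letter of `p` and also the varying `x`
    by_contra! hlt
    have hx : ∀ x, p[p'.length]? = some x := fun x => by
      obtain ⟨t, ht⟩ := hu'.exists_subst_eq_cons x
      simpa [ht, List.getElem?_append_left hlt] using congrArg (·[p'.length]?) (h x)
    exact absurd ((hx ⟨0, by omega⟩).symm.trans (hx ⟨1, by omega⟩)) (by simp)
  have hlen := le_antisymm (key p p' u u' hu' h) (key p' p u' u hu fun x => (h x).symm)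
  exact (List.append_inj (h ⟨0, by omega⟩) hlen).1

def blocks (ws : ℕ → VWord k) (a : ℕ → Fin k) (n : ℕ) : Word k :=
  ((List.range n).map fun i => subst (ws i) (a i)).flatten

def blocksFrom (ws : ℕ → VWord k) (a : ℕ → Fin k) (j n : ℕ) : Word k :=
  ((List.range' j (n - j)).map fun i => subst (ws i) (a i)).flatten

section Blocks

variable (ws : ℕ → VWord k) (a : ℕ → Fin k)

theorem blocks_succ (n : ℕ) :
    blocks ws a (n + 1) = blocks ws a n ++ subst (ws n) (a n) := by
  simp [blocks, List.range_succ]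

theorem blocks_append_blocksFrom {j n : ℕ} (h : j ≤ n) :
    blocks ws a j ++ blocksFrom ws a j n = blocks ws a n := by
  have := List.range'_append (s := 0) (m := j) (n := n - j) (step := 1)
  simp only [zero_add, one_mul, Nat.add_sub_cancel' h] at this
  simp only [blocks, blocksFrom, List.range_eq_range', ← this, List.map_append,
    List.flatten_append]

theorem blocksFrom_eq_append {j n : ℕ} (h : j < n) :
    blocksFrom ws a j n = subst (ws j) (a j) ++ blocksFrom ws a (j + 1) n := by
  rw [blocksFrom, show n - j = n - (j + 1) + 1 by omega, List.range'_succ]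
  rfl

theorem blocks_length (n : ℕ) :
    (blocks ws a n).length = ((List.range n).map fun i => (ws i).length).sum := by
  simp [blocks, List.length_flatten, Function.comp_def, subst_length]

theorem blocks_update {n j : ℕ} (h : n ≤ j) (x : Fin k) :
    blocks ws (Function.update a j x) n = blocks ws a n :=
  congrArg List.flatten <| List.map_congr_left fun i hi => by
    rw [Function.update_of_ne (by have := List.mem_range.1 hi; omega)]

variable {ws a}

theorem blocks_congr {ws' : ℕ → VWord k} {a' : ℕ → Fin k} {n : ℕ}
    (h : ∀ i < n, subst (ws i) (a i) = subst (ws' i) (a' i)) :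
    blocks ws a n = blocks ws' a' n :=
  congrArg List.flatten <| List.map_congr_left fun i hi => h i (List.mem_range.1 hi)

end Blocks

namespace CSTree

variable {W U : CSTree k} {n : ℕ} {x : Word k}

theorem mem_level_iff : x ∈ W.level n ↔ ∃ a, x = W.c ++ blocks W.ws a n := Iff.rfl

def levelLength (W : CSTree k) (n : ℕ) : ℕ :=
  W.c.length + ((List.range n).map fun i => (W.ws i).length).sum

theorem length_append_blocks (a : ℕ → Fin k) (n : ℕ) :
    (W.c ++ blocks W.ws a n).length = W.levelLength n := by
  rw [List.length_append, blocks_length, levelLength]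

theorem length_of_mem_level (hx : x ∈ W.level n) : x.length = W.levelLength n := by
  obtain ⟨a, rfl⟩ := hx
  exact length_append_blocks a n

theorem levelLength_succ (n : ℕ) :
    W.levelLength (n + 1) = W.levelLength n + (W.ws n).length := by
  simp [levelLength, List.range_succ, Nat.add_assoc]

theorem levelLength_mono (W : CSTree k) : Monotone W.levelLength :=
  monotone_nat_of_le_succ fun n => by rw [levelLength_succ]; omega

theorem levelLength_lt {i j : ℕ} (hij : i < j) (hj : j ≤ W.dim) :
    W.levelLength i < W.levelLength j :=
  calc W.levelLength i < W.levelLength (i + 1) := by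
        rw [levelLength_succ]
        exact Nat.lt_add_of_pos_right (List.length_pos_iff.2 (W.left i (by omega)).ne_nil)
    _ ≤ W.levelLength j := W.levelLength_mono hij

/-- Block `t` starts at position `levelLength t`, with the letter substituted for its
variable. -/
theorem getElem?_levelLength {t : ℕ} (ht : t < n) (hn : n ≤ W.dim) (a : ℕ → Fin k) :
    (W.c ++ blocks W.ws a n)[W.levelLength t]? = some (a t) := by
  obtain ⟨u, hu⟩ := (W.left t (by omega)).exists_subst_eq_cons (a t)
  rw [← blocks_append_blocksFrom W.ws a ht.le, blocksFrom_eq_append W.ws a ht, hu,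
    ← List.append_assoc, List.getElem?_append_right (length_append_blocks (W := W) a t).le,
    length_append_blocks, Nat.sub_self]
  rfl

theorem append_subst_mem_level_succ (hx : x ∈ W.level n) (v : Fin k) :
    x ++ subst (W.ws n) v ∈ W.level (n + 1) := by
  obtain ⟨a, rfl⟩ := hx
  refine ⟨Function.update a n v, ?_⟩
  change W.c ++ blocks W.ws a n ++ _ = W.c ++ blocks W.ws _ (n + 1)
  rw [blocks_succ, Function.update_self, List.append_assoc,
    blocks_congr (a := Function.update a n v) (a' := a) fun i hi => by
      rw [Function.update_of_ne hi.ne]]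

theorem level_subset_carrier (hn : n ≤ W.dim) : W.level n ⊆ W.carrier :=
  Set.subset_biUnion_of_mem (u := W.level) (Finset.mem_coe.2 (Finset.mem_range.2 (by omega)))

theorem carrier_subset {s : Set (Word k)} (h : ∀ n ≤ W.dim, W.level n ⊆ s) :
    W.carrier ⊆ s :=
  Set.iUnion₂_subset fun n hn => h n (Nat.lt_succ_iff.1 (Finset.mem_range.1 hn))

theorem level_congr (hc : U.c = W.c) (h : ∀ i < n, ∀ v, subst (U.ws i) v = subst (W.ws i) v) :
    U.level n = W.level n := by
  ext x
  simp only [mem_level_iff, hc, blocks_congr fun i hi => h i hi _]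

theorem carrier_congr (hd : U.dim = W.dim) (h : ∀ n ≤ U.dim, U.level n = W.level n) :
    U.carrier = W.carrier := by
  simp only [carrier, hd]
  refine Set.iUnion₂_congr fun n hn => h n ?_
  have := Finset.mem_range.1 hn
  omega

/-- Word lengths separate the levels of depth `≤ dim`; the levels beyond `dim` are junk. -/
theorem mem_level_min_dim {i : ℕ} (hx : x ∈ W.level i) (hxW : x ∈ W.carrier) :
    x ∈ W.level (min i W.dim) := by
  obtain ⟨j, hj, hxj⟩ := Set.mem_iUnion₂.1 hxW
  have hjd : j ≤ W.dim := Nat.lt_succ_iff.1 (Finset.mem_range.1 hj)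
  have hlen : W.levelLength j = W.levelLength i := by
    rw [← length_of_mem_level hxj, length_of_mem_level hx]
  suffices min i W.dim = j by rwa [this]
  rcases lt_trichotomy (min i W.dim) j with h | h | h
  · have := levelLength_lt h hjd
    rw [min_eq_left (by omega)] at this
    omega
  · exact h
  · have := (levelLength_lt h (min_le_right _ _)).trans_le (W.levelLength_mono (min_le_left _ _))
    omega

def truncate (W : CSTree k) (j : ℕ) (hj : 1 ≤ j) (hjW : j ≤ W.dim) : CSTree k :=
  ⟨j, W.c, W.ws, hj, fun i hi => W.left i (by omega)⟩

theorem truncate_carrier_subset {j : ℕ} (hj : 1 ≤ j) (hjW : j ≤ W.dim) :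
    (W.truncate j hj hjW).carrier ⊆ W.carrier :=
  carrier_subset fun _ hn => level_subset_carrier (W := W) (hn.trans hjW)

def snoc (U : CSTree k) (w : VWord k) (hw : IsLeftVar w) : CSTree k :=
  ⟨U.dim + 1, U.c, Function.update U.ws U.dim w, by omega, fun i hi => by
    rcases (Nat.lt_succ_iff.1 hi).lt_or_eq with h | rfl
    · rw [Function.update_of_ne h.ne]; exact U.left i h
    · rwa [Function.update_self]⟩

theorem snoc_level {w : VWord k} (hw : IsLeftVar w) (hn : n ≤ U.dim) :
    (U.snoc w hw).level n = U.level n :=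
  level_congr rfl fun i hi _ => by
    simp only [snoc]; rw [Function.update_of_ne (by omega)]

theorem snoc_level_succ_subset (hw : IsLeftVar (W.ws n)) (h : U.level U.dim ⊆ W.level n) :
    (U.snoc (W.ws n) hw).level (U.dim + 1) ⊆ W.level (n + 1) := by
  rintro _ ⟨a, rfl⟩
  have hx : U.c ++ blocks U.ws a U.dim ∈ W.level n := h ⟨a, rfl⟩
  convert append_subst_mem_level_succ hx (a U.dim) using 1
  change U.c ++ blocks (Function.update U.ws U.dim (W.ws n)) a (U.dim + 1) = _
  rw [blocks_succ, Function.update_self, List.append_assoc,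
    blocks_congr (ws := Function.update U.ws U.dim _) (ws' := U.ws) (a' := a) fun i hi => by
      rw [Function.update_of_ne hi.ne]]

theorem snoc_carrier_subset (hw : IsLeftVar (W.ws n)) (hn : n < W.dim)
    (hU : U.carrier ⊆ W.carrier) (h : U.level U.dim ⊆ W.level n) :
    (U.snoc (W.ws n) hw).carrier ⊆ W.carrier := by
  refine carrier_subset fun j hj => ?_
  rcases (show j ≤ U.dim ∨ j = U.dim + 1 by simp only [snoc] at hj; omega) with hj | rfl
  · rw [snoc_level hw hj]
    exact (level_subset_carrier hj).trans hU
  · exact (snoc_level_succ_subset hw h).trans (level_subset_carrier hn)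

end CSTree

section Subspaces

variable {M : ℕ}

theorem substM_append (u v : List (Fin k ⊕ Fin M)) (b : Fin M → Fin k) :
    substM (u ++ v) b = substM u b ++ substM v b :=
  List.map_append

theorem substM_injective {w : List (Fin k ⊕ Fin M)} (hw : IsMVarWord k M w) :
    Function.Injective (substM (k := k) w) := fun _ _ h =>
  funext fun j => List.map_inj_left.1 h (Sum.inr j) (hw.1 j)

theorem isMVarWord_of_pairwise {w : List (Fin k ⊕ Fin M)} (hmem : ∀ j, Sum.inr j ∈ w)
    (hw : w.Pairwise fun x y => ∀ i j, x = Sum.inr i → y = Sum.inr j → i ≤ j) :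
    IsMVarWord k M w := by
  refine ⟨hmem, fun i j hij p q hp hq => ?_⟩
  by_contra hpq
  rcases (not_lt.1 hpq).lt_or_eq with h | h
  · exact (List.pairwise_iff_get.1 hw q p h j i hq hp).not_gt hij
  · rw [Fin.ext h] at hq
    exact hij.ne (Sum.inr_injective (hp.symm.trans hq))

theorem exists_isSubspace (k M : ℕ) : ∃ V : Set (Word k), IsSubspace k M V := by
  refine ⟨_, _, isMVarWord_of_pairwise (w := (List.finRange M).map Sum.inr)
    (fun j => List.mem_map_of_mem (List.mem_finRange j)) ?_, rfl⟩
  exact List.pairwise_map.2 <| (List.pairwise_lt_finRange M).imp fun h i j hi hj => by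
    cases hi; cases hj; exact h.le

theorem IsSubspace.ncard {V : Set (Word k)} (hV : IsSubspace k M V) : V.ncard = k ^ M := by
  obtain ⟨w, hw, rfl⟩ := hV
  have : {x : Word k | ∃ b, x = substM w b} = Set.range (substM w) := by
    ext; simp [eq_comm]
  rw [this, ← Set.image_univ, Set.ncard_image_of_injective _ (substM_injective hw),
    Set.ncard_univ, Nat.card_eq_fintype_card, Fintype.card_fun, Fintype.card_fin,
    Fintype.card_fin]

theorem IsSubspace.le_of_subset (hk : 2 ≤ k) {d d' : ℕ} {V V' : Set (Word k)}
    (hV : IsSubspace k d V) (hV' : IsSubspace k d' V') (h : V ⊆ V') : d ≤ d' := by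
  have hfin : V'.Finite := Set.finite_of_ncard_pos (by
    rw [hV'.ncard]; exact pow_pos (by omega) _)
  have := Set.ncard_le_ncard h hfin
  rwa [hV.ncard, hV'.ncard, Nat.pow_le_pow_iff_right (by omega)] at this

end Subspaces

namespace CSTree

def levelWord (W : CSTree k) (j : ℕ) : List (Fin k ⊕ Fin j) :=
  W.c.map Sum.inl ++
    ((List.finRange j).map fun i : Fin j =>
      (W.ws i).map fun o => o.elim (Sum.inr i) Sum.inl).flatten

theorem substM_levelWord (W : CSTree k) (j : ℕ) (a : ℕ → Fin k) :
    substM (W.levelWord j) (fun i => a i) = W.c ++ blocks W.ws a j := by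
  rw [substM, levelWord, List.map_append, List.map_map, List.map_flatten, List.map_map, blocks,
    ← List.map_coe_finRange_eq_range, List.map_map]
  congr 2
  · ext; simp
  · refine List.map_congr_left fun i _ => ?_
    simp only [Function.comp_apply, List.map_map, subst]
    refine List.map_congr_left fun o _ => ?_
    cases o <;> rfl

theorem mem_level_iff_levelWord (hk : 0 < k) {W : CSTree k} {j : ℕ} {x : Word k} :
    x ∈ W.level j ↔ ∃ b, x = substM (W.levelWord j) b := by
  constructor
  · rintro ⟨a, rfl⟩
    exact ⟨_, (substM_levelWord W j a).symm⟩
  · rintro ⟨b, rfl⟩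
    refine ⟨fun i => if h : i < j then b ⟨i, h⟩ else ⟨0, hk⟩, ?_⟩
    change _ = W.c ++ blocks W.ws _ j
    rw [← substM_levelWord]
    simp

theorem isMVarWord_levelWord (W : CSTree k) {j : ℕ} (hj : j ≤ W.dim) :
    IsMVarWord k j (W.levelWord j) := by
  have hblock : ∀ i : Fin j, ∀ x ∈ (W.ws i).map (fun o => o.elim (Sum.inr i) Sum.inl),
      ∀ i' : Fin j, x = Sum.inr i' → i' = i := by
    intro i x hx i' rfl
    obtain ⟨o, -, ho⟩ := List.mem_map.1 hx
    cases o <;> simp_all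
  refine isMVarWord_of_pairwise (fun i => ?_) ?_
  · obtain ⟨t, ht⟩ := (W.left i (by omega)).exists_eq_cons
    refine List.mem_append_right _ (List.mem_flatten_of_mem
      (List.mem_map_of_mem (List.mem_finRange i)) ?_)
    rw [ht]
    exact List.mem_cons_self
  refine List.pairwise_append.2 ⟨?_, List.pairwise_flatten.2 ⟨?_, ?_⟩, ?_⟩
  · exact List.pairwise_map.2 (List.pairwise_of_forall fun _ _ _ _ h => by cases h)
  · intro l hl
    obtain ⟨i, -, rfl⟩ := List.mem_map.1 hl
    exact List.pairwise_of_forall_mem_list fun x hx y hy i₁ j₁ hx' hy' =>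
      (hblock i x hx i₁ hx').trans (hblock i y hy j₁ hy').symm |>.le
  · refine List.pairwise_map.2 <| (List.pairwise_lt_finRange j).imp ?_
    exact fun hlt x hx y hy i₁ j₁ hx' hy' =>
      (hblock _ x hx i₁ hx') ▸ (hblock _ y hy j₁ hy') ▸ hlt.le
  · intro x hx _ _ i₁ _ hx'
    obtain ⟨_, -, rfl⟩ := List.mem_map.1 hx
    cases hx'

theorem isSubspace_level (hk : 0 < k) (W : CSTree k) {j : ℕ} (hj : j ≤ W.dim) :
    IsSubspace k j (W.level j) :=
  ⟨W.levelWord j, W.isMVarWord_levelWord hj, Set.ext fun _ => mem_level_iff_levelWord hk⟩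

end CSTree

section Patterns

variable {M : ℕ}

/-- `d` is the first letter of `u`, matched with the variable that `g` starts with. -/
theorem exists_forall_substM_eq_subst (hk : 0 < k) {u : List (Fin k ⊕ Fin M)} {g : VWord k}
    (hg : IsLeftVar g) (h : ∀ b, ∃ v, substM u b = subst g v) :
    ∃ d, ∀ b, substM u b = subst g (Sum.elim id b d) := by
  obtain ⟨g', rfl⟩ := hg.exists_eq_cons
  cases u with
  | nil =>
    obtain ⟨v, hv⟩ := h fun _ => ⟨0, hk⟩
    cases hv
  | cons d u =>
    refine ⟨d, fun b => ?_⟩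
    obtain ⟨v, hv⟩ := h b
    obtain ⟨rfl, -⟩ := List.cons_eq_cons.1 hv
    exact hv

theorem Sum.eq_of_forall_elim_id_eq (hk : 2 ≤ k) {x y : Fin k ⊕ Fin M}
    (h : ∀ b : Fin M → Fin k, Sum.elim id b x = Sum.elim id b y) : x = y := by
  have h01 : (⟨0, by omega⟩ : Fin k) ≠ ⟨1, by omega⟩ := by simp
  rcases x with x | i <;> rcases y with y | j
  · simpa using h fun _ => ⟨0, by omega⟩
  · exact absurd ((h fun _ => ⟨0, by omega⟩).symm.trans (h fun _ => ⟨1, by omega⟩)) h01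
  · exact absurd ((h fun _ => ⟨0, by omega⟩).trans (h fun _ => ⟨1, by omega⟩).symm) h01
  · obtain rfl | hij := eq_or_ne i j
    · rfl
    · have := h (Function.update (fun _ => ⟨0, by omega⟩) i ⟨1, by omega⟩)
      simp only [Sum.elim_inr, Function.update_self, Function.update_of_ne hij.symm] at this
      exact absurd this.symm h01

structure IsOrderedPattern (A : ℕ → Fin k ⊕ Fin M) (n : ℕ) : Prop where
  exists_eq_inr : ∀ j, ∃ t < n, A t = Sum.inr j
  lt_of_eq_inr :
    ∀ t < n, ∀ t' < n, ∀ i j, A t = Sum.inr i → A t' = Sum.inr j → i < j → t < t'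

namespace CSTree

variable {W : CSTree k} {n : ℕ}

/-- The *pattern* `A` of `w` in `W(n)`: block `t` of `W` receives the constant letter or the
variable `A t` of `w`. -/
theorem exists_pattern (hk : 0 < k) (hn : n ≤ W.dim) {w : List (Fin k ⊕ Fin M)}
    (hw : ∀ b, substM w b ∈ W.level n) :
    ∃ A : ℕ → Fin k ⊕ Fin M,
      ∀ b, substM w b = W.c ++ blocks W.ws (Sum.elim id b ∘ A) n := by
  induction n generalizing w with
  | zero =>
    refine ⟨fun _ => Sum.inl ⟨0, hk⟩, fun b => ?_⟩
    obtain ⟨a, ha⟩ := hw b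
    exact ha
  | succ n ih =>
    have hsplit : ∀ b, ∃ a, substM (w.take (W.levelLength n)) b = W.c ++ blocks W.ws a n ∧
        substM (w.drop (W.levelLength n)) b = subst (W.ws n) (a n) := by
      intro b
      obtain ⟨a, ha⟩ := hw b
      change substM w b = W.c ++ blocks W.ws a (n + 1) at ha
      rw [blocks_succ, ← List.append_assoc] at ha
      refine ⟨a, ?_, ?_⟩
      · rw [substM, List.map_take, ← substM, ha, List.take_left' (length_append_blocks a n)]
      · rw [substM, List.map_drop, ← substM, ha, List.drop_left' (length_append_blocks a n)]
    obtain ⟨A, hA⟩ := ih (by omega) fun b =>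
      let ⟨a, h, _⟩ := hsplit b
      ⟨a, h⟩
    obtain ⟨d, hd⟩ := exists_forall_substM_eq_subst hk (W.left n (by omega)) fun b =>
      let ⟨a, _, h⟩ := hsplit b
      ⟨a n, h⟩
    refine ⟨Function.update A n d, fun b => ?_⟩
    rw [← List.take_append_drop (W.levelLength n) w, substM_append, hA, hd, blocks_succ,
      List.append_assoc, Function.comp_apply, Function.update_self]
    congr 2
    exact blocks_congr fun i hi => by simp [Function.update_of_ne hi.ne]

variable {w : List (Fin k ⊕ Fin M)} {A : ℕ → Fin k ⊕ Fin M}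

theorem exists_pattern_eq_inr (hk : 2 ≤ k) (hw : IsMVarWord k M w)
    (hA : ∀ b, substM w b = W.c ++ blocks W.ws (Sum.elim id b ∘ A) n) (j : Fin M) :
    ∃ t < n, A t = Sum.inr j := by
  by_contra! h
  have hb : ∀ b₀ : Fin M → Fin k, ∀ x,
      substM w b₀ = substM w (Function.update b₀ j x) := by
    intro b₀ x
    rw [hA, hA]
    congr 1
    refine blocks_congr fun t ht => ?_
    rcases hAt : A t with y | i
    · simp only [Function.comp_apply, hAt, Sum.elim_inl]
    · have hij : i ≠ j := by rintro rfl; exact h t ht hAt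
      simp only [Function.comp_apply, hAt, Sum.elim_inr, Function.update_of_ne hij]
  have := List.map_inj_left.1 (hb (fun _ => ⟨0, by omega⟩) ⟨1, by omega⟩) _ (hw.1 j)
  simp only [Sum.elim_inr, Function.update_self, Fin.mk.injEq] at this
  omega

theorem getElem?_levelLength_eq_pattern (hk : 2 ≤ k) (hn : n ≤ W.dim)
    (hA : ∀ b, substM w b = W.c ++ blocks W.ws (Sum.elim id b ∘ A) n) {t : ℕ} (ht : t < n) :
    w[W.levelLength t]? = some (A t) := by
  have h : ∀ b, (w[W.levelLength t]?).map (Sum.elim id b) = some (Sum.elim id b (A t)) :=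
    fun b => by rw [← List.getElem?_map, ← substM, hA, getElem?_levelLength ht hn]; rfl
  cases hwt : w[W.levelLength t]? with
  | none => simpa [hwt] using h fun _ => ⟨0, by omega⟩
  | some y =>
    refine congrArg some <| Sum.eq_of_forall_elim_id_eq hk fun b => ?_
    have := h b
    rw [hwt] at this
    exact Option.some.inj this

theorem lt_of_pattern_eq_inr (hk : 2 ≤ k) (hw : IsMVarWord k M w) (hn : n ≤ W.dim)
    (hA : ∀ b, substM w b = W.c ++ blocks W.ws (Sum.elim id b ∘ A) n) {t t' : ℕ}
    (ht : t < n) (ht' : t' < n) {i j : Fin M} (hi : A t = Sum.inr i) (hj : A t' = Sum.inr j)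
    (hij : i < j) : t < t' := by
  obtain ⟨hp, hp'⟩ := List.getElem?_eq_some_iff.1 (getElem?_levelLength_eq_pattern hk hn hA ht)
  obtain ⟨hq, hq'⟩ := List.getElem?_eq_some_iff.1 (getElem?_levelLength_eq_pattern hk hn hA ht')
  have := hw.2 i j hij ⟨_, hp⟩ ⟨_, hq⟩ (hp'.trans hi) (hq'.trans hj)
  by_contra h
  exact (W.levelLength_mono (not_lt.1 h)).not_gt this

theorem isOrderedPattern (hk : 2 ≤ k) (hw : IsMVarWord k M w) (hn : n ≤ W.dim)
    (hA : ∀ b, substM w b = W.c ++ blocks W.ws (Sum.elim id b ∘ A) n) : IsOrderedPattern A n :=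
  ⟨exists_pattern_eq_inr hk hw hA,
    fun _ ht _ ht' _ _ => lt_of_pattern_eq_inr hk hw hn hA ht ht'⟩

end CSTree

end Patterns

section Cuts

variable {M : ℕ}

structure IsCuts (A : ℕ → Fin k ⊕ Fin M) (n : ℕ) (T : ℕ → ℕ) : Prop where
  mono : Monotone T
  apply_self : T M = n
  lt_succ : ∀ j : Fin M, T j < T (j + 1)
  eq_inr : ∀ j : Fin M, A (T j) = Sum.inr j
  mem_Ico : ∀ t < n, ∀ i : Fin M, A t = Sum.inr i → T i ≤ t ∧ t < T (i + 1)

variable {A : ℕ → Fin k ⊕ Fin M} {n : ℕ}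

theorem IsOrderedPattern.exists_isCuts (hA : IsOrderedPattern A n) : ∃ T, IsCuts A n T := by
  classical
  let T : ℕ → ℕ := fun j => if h : j < M then Nat.find (hA.exists_eq_inr ⟨j, h⟩) else n
  have hT : ∀ j : Fin M, T j < n ∧ A (T j) = Sum.inr j := fun j => by
    simpa [T] using Nat.find_spec (hA.exists_eq_inr j)
  have hTmin : ∀ j : Fin M, ∀ t < n, A t = Sum.inr j → T j ≤ t := fun j t ht h => by
    simpa [T] using Nat.find_min' (hA.exists_eq_inr j) ⟨ht, h⟩
  have hTM : ∀ j, M ≤ j → T j = n := fun j h => dif_neg (by omega)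
  have hlt_succ : ∀ i : Fin M, ∀ t < n, A t = Sum.inr i → t < T (i + 1) := by
    intro i t ht hi
    by_cases h : (i : ℕ) + 1 < M
    · exact hA.lt_of_eq_inr t ht _ (hT ⟨i + 1, h⟩).1 i ⟨i + 1, h⟩ hi (hT ⟨i + 1, h⟩).2
        (by simp [Fin.lt_def])
    · rwa [hTM _ (by omega)]
  have hsucc : ∀ j : Fin M, T j < T (j + 1) := fun j => hlt_succ j _ (hT j).1 (hT j).2
  refine ⟨T, monotone_nat_of_le_succ fun j => ?_, hTM M le_rfl, hsucc, fun j => (hT j).2,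
    fun t ht i hi => ⟨hTmin i t ht hi, hlt_succ i t ht hi⟩⟩
  by_cases h : j < M
  · exact (hsucc ⟨j, h⟩).le
  · rw [hTM j (by omega), hTM (j + 1) (by omega)]

variable {T : ℕ → ℕ} {t : ℕ}

theorem IsCuts.elim_eq_of_lt_zero (hT : IsCuts A n T) (ht : t < T 0) (b b' : Fin M → Fin k) :
    Sum.elim id b (A t) = Sum.elim id b' (A t) := by
  rcases hAt : A t with y | i
  · rfl
  · have := (hT.mem_Ico t (ht.trans_le (hT.apply_self ▸ hT.mono (Nat.zero_le M))) i hAt).1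
    have := hT.mono (Nat.zero_le (i : ℕ))
    omega

theorem IsCuts.elim_eq_of_mem_Ico (hT : IsCuts A n T) {j : ℕ} (hj : j < M) (h₁ : T j ≤ t)
    (h₂ : t < T (j + 1)) (b : Fin M → Fin k) :
    Sum.elim id b (A t) = Sum.elim id (fun _ => b ⟨j, hj⟩) (A t) := by
  rcases hAt : A t with y | i
  · rfl
  · obtain ⟨h₃, h₄⟩ :=
      hT.mem_Ico t (h₂.trans_le (hT.apply_self ▸ hT.mono (by omega))) i hAt
    obtain rfl : i = ⟨j, hj⟩ := by
      ext
      rcases lt_trichotomy (i : ℕ) j with h | h | h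
      · have := hT.mono (show (i : ℕ) + 1 ≤ j by omega); omega
      · exact h
      · have := hT.mono (show j + 1 ≤ (i : ℕ) by omega); omega
    rfl

end Cuts

namespace CSTree

variable {M : ℕ} {W : CSTree k}

def patternBlock (W : CSTree k) (A : ℕ → Fin k ⊕ Fin M) (t : ℕ) : VWord k :=
  (A t).elim (fun y => (subst (W.ws t) y).map some) fun _ => W.ws t

theorem subst_patternBlock (A : ℕ → Fin k ⊕ Fin M) (t : ℕ) (v : Fin k) :
    subst (W.patternBlock A t) v = subst (W.ws t) (Sum.elim id (fun _ => v) (A t)) := by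
  unfold patternBlock
  rcases A t with y | i
  · exact subst_map_some _ _
  · rfl

/-- The `j`-th generating word of the subtree is the concatenation of the pattern blocks from
the first occurrence of `v_j` up to that of `v_{j+1}`. -/
theorem exists_subtree_of_isOrderedPattern (hk : 0 < k) (hM : 1 ≤ M) {A : ℕ → Fin k ⊕ Fin M}
    (hA : IsOrderedPattern A W.dim) :
    ∃ W' : CSTree k, W'.dim = M ∧ W'.carrier ⊆ W.carrier ∧ ∀ a : ℕ → Fin k,
      W'.c ++ blocks W'.ws a M =
        W.c ++ blocks W.ws (Sum.elim id (fun i : Fin M => a i) ∘ A) W.dim := by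
  obtain ⟨T, hT⟩ := hA.exists_isCuts
  let e : (ℕ → Fin k) → ℕ → Fin k := fun a => Sum.elim id (fun i : Fin M => a i) ∘ A
  let ws' : ℕ → VWord k := fun j =>
    ((List.range' (T j) (T (j + 1) - T j)).map (W.patternBlock A)).flatten
  have hleft : ∀ j < M, IsLeftVar (ws' j) := by
    intro j hj
    have hlt : T j < T (j + 1) := hT.lt_succ ⟨j, hj⟩
    obtain ⟨u, hu⟩ := (W.left (T j)
      (hT.apply_self ▸ hlt.trans_le (hT.mono (by omega)))).exists_eq_cons
    show IsLeftVar ((List.range' (T j) (T (j + 1) - T j)).map (W.patternBlock A)).flatten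
    rw [show T (j + 1) - T j = T (j + 1) - T j - 1 + 1 by omega, List.range'_succ,
      List.map_cons, List.flatten_cons, patternBlock, hT.eq_inr ⟨j, hj⟩, Sum.elim_inr, hu]
    rfl
  have hsubst :
      ∀ a, ∀ j < M, subst (ws' j) (a j) = blocksFrom W.ws (e a) (T j) (T (j + 1)) := by
    intro a j hj
    rw [subst_flatten, List.map_map, blocksFrom]
    refine congrArg List.flatten (List.map_congr_left fun t ht => ?_)
    obtain ⟨h₁, h₂⟩ := List.mem_range'_1.1 ht
    rw [Function.comp_apply, subst_patternBlock]
    exact congrArg (subst (W.ws t)) (hT.elim_eq_of_mem_Ico hj h₁ (by omega) fun i => a i).symm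
  let W' : CSTree k := ⟨M, W.c ++ blocks W.ws (e fun _ => ⟨0, hk⟩) (T 0), ws', hM,
    fun j hj => hleft j hj⟩
  have hlevel : ∀ a, ∀ j ≤ M, W'.c ++ blocks W'.ws a j = W.c ++ blocks W.ws (e a) (T j) := by
    intro a j hj
    induction j with
    | zero =>
      rw [show blocks W'.ws a 0 = [] from rfl, List.append_nil]
      exact congrArg (W.c ++ ·) (blocks_congr (ws := W.ws) (ws' := W.ws) fun t ht =>
        congrArg (subst (W.ws t)) (hT.elim_eq_of_lt_zero ht _ _))
    | succ j ih =>
      rw [blocks_succ, ← List.append_assoc, ih (by omega), hsubst a j (by omega),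
        List.append_assoc, blocks_append_blocksFrom _ _ (hT.mono (Nat.le_succ j))]
  refine ⟨W', rfl, carrier_subset fun j hj => ?_,
    fun a => by rw [hlevel a M le_rfl, hT.apply_self]⟩
  rintro _ ⟨a, rfl⟩
  exact level_subset_carrier (hT.apply_self ▸ hT.mono hj) ⟨e a, hlevel a j hj⟩

theorem exists_subtree_level_subset (hk : 2 ≤ k) (hM : 1 ≤ M) {X : Set (Word k)}
    (hX : IsSubspace k M X) (hXW : X ⊆ W.level W.dim) :
    ∃ W' : CSTree k, W'.dim = M ∧ W'.carrier ⊆ W.carrier ∧ W'.level M ⊆ X := by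
  obtain ⟨w, hw, rfl⟩ := hX
  obtain ⟨A, hA⟩ := exists_pattern (by omega) le_rfl fun b => hXW ⟨b, rfl⟩
  obtain ⟨W', hdim, hcar, htop⟩ :=
    exists_subtree_of_isOrderedPattern (by omega) hM (isOrderedPattern hk hw le_rfl hA)
  refine ⟨W', hdim, hcar, ?_⟩
  rintro _ ⟨a, rfl⟩
  exact ⟨fun i => a i, by rw [hA]; exact htop a⟩

end CSTree

namespace CSTree

theorem forall_append_blocks_eq_of_succ (hk : 2 ≤ k) {S T : CSTree k} {n : ℕ} (hS : n < S.dim)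
    (hT : n < T.dim) (h : ∀ a, S.c ++ blocks S.ws a (n + 1) = T.c ++ blocks T.ws a (n + 1))
    (a : ℕ → Fin k) : S.c ++ blocks S.ws a n = T.c ++ blocks T.ws a n := by
  refine eq_of_forall_append_subst_eq hk (S.left n hS) (T.left n hT) fun x => ?_
  have := h (Function.update a n x)
  rwa [blocks_succ, blocks_succ, Function.update_self, blocks_update _ _ le_rfl,
    blocks_update _ _ le_rfl, ← List.append_assoc, ← List.append_assoc] at this

theorem level_eq_of_forall_append_blocks_eq (hk : 2 ≤ k) {S T : CSTree k} {m : ℕ}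
    (hS : m ≤ S.dim) (hT : m ≤ T.dim)
    (h : ∀ a, S.c ++ blocks S.ws a m = T.c ++ blocks T.ws a m) {j : ℕ} (hj : j ≤ m) :
    S.level j = T.level j := by
  induction m with
  | zero =>
    obtain rfl := Nat.le_zero.1 hj
    ext
    simp only [mem_level_iff, h]
  | succ m ih =>
    rcases hj.lt_or_eq with hj | rfl
    · exact ih (by omega) (by omega)
        (forall_append_blocks_eq_of_succ hk (by omega) (by omega) h) (by omega)
    · ext
      simp only [mem_level_iff, h]

/-- In the pattern of the level word of `S` inside `T(m)`, the `m` variables occupy `m` blocks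
in increasing order, so block `t` carries `v_t` and `S(m)`, `T(m)` are parametrised alike. -/
theorem carrier_eq_of_level_subset (hk : 2 ≤ k) {S T : CSTree k} {m : ℕ} (hS : S.dim = m)
    (hT : T.dim = m) (h : S.level m ⊆ T.level m) : S.carrier = T.carrier := by
  have hw := S.isMVarWord_levelWord hS.ge
  obtain ⟨A, hA⟩ := exists_pattern (by omega) hT.ge (w := S.levelWord m) fun b =>
    h ((mem_level_iff_levelWord (by omega)).2 ⟨b, rfl⟩)
  obtain ⟨τ, hτ⟩ := (isOrderedPattern hk hw hT.ge hA).exists_isCuts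
  have hτid : ∀ j : Fin m, τ j = j := by
    let σ : Fin m → Fin m := fun j =>
      ⟨τ j, (hτ.lt_succ j).trans_le ((hτ.mono j.2).trans hτ.apply_self.le)⟩
    have hσ : StrictMono σ := fun i j hij =>
      Fin.lt_def.2 ((hτ.lt_succ i).trans_le (hτ.mono (Nat.succ_le_of_lt hij)))
    exact fun j => congrArg Fin.val (congrFun hσ.eq_id j)
  have hid : ∀ a, S.c ++ blocks S.ws a m = T.c ++ blocks T.ws a m := fun a => by
    rw [← substM_levelWord, hA]
    refine congrArg (T.c ++ ·) (blocks_congr fun t ht => ?_)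
    have := hτ.eq_inr ⟨t, ht⟩
    rw [hτid] at this
    simp [this]
  exact carrier_congr (hS.trans hT.symm) fun j hj =>
    level_eq_of_forall_append_blocks_eq hk hS.ge hT.ge hid (hS ▸ hj)

end CSTree

section Ramsey

variable {α : Type*}

def TreeMonochromatic (χ : Set (Word k) → α) (m : ℕ) (L : Set (Word k)) : Prop :=
  ∀ S T : CSTree k, S.dim = m → T.dim = m → S.level m ⊆ L → T.level m ⊆ L →
    χ S.carrier = χ T.carrier

theorem TreeMonochromatic.subset {χ : Set (Word k) → α} {m : ℕ} {L L' : Set (Word k)}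
    (hL : TreeMonochromatic χ m L) (h : L' ⊆ L) : TreeMonochromatic χ m L' :=
  fun S T hS hT hSL hTL => hL S T hS hT (hSL.trans h) (hTL.trans h)

theorem treeMonochromatic_level (hk : 2 ≤ k) (χ : Set (Word k) → α) {m : ℕ} (U : CSTree k)
    (hm : m ≤ U.dim) : TreeMonochromatic χ m (U.level m) := by
  intro S T hS hT hSU hTU
  have hm₁ : 1 ≤ m := hS ▸ S.dim_pos
  rw [CSTree.carrier_eq_of_level_subset (T := U.truncate m hm₁ hm) hk hS rfl hSU,
    CSTree.carrier_eq_of_level_subset (T := U.truncate m hm₁ hm) hk hT rfl hTU]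

open Classical in
noncomputable def levelColoring (χ : Set (Word k) → α) (m : ℕ) (Y : Set (Word k)) : α :=
  if h : ∃ S : CSTree k, S.dim = m ∧ S.level m = Y then χ h.choose.carrier else χ Y

theorem levelColoring_level (hk : 2 ≤ k) (χ : Set (Word k) → α) {m : ℕ} {S : CSTree k}
    (hS : S.dim = m) : levelColoring χ m (S.level m) = χ S.carrier := by
  have h : ∃ S' : CSTree k, S'.dim = m ∧ S'.level m = S.level m := ⟨S, hS, rfl⟩
  rw [levelColoring, dif_pos h]
  exact congrArg χ (CSTree.carrier_eq_of_level_subset hk h.choose_spec.1 hS h.choose_spec.2.le)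

def IsGrahamRothschildBound (k m r : ℕ) (g : ℕ → ℕ) : Prop :=
  ∀ n, m - 1 ≤ n → ∀ d, g n ≤ d → ∀ V : Set (Word k), IsSubspace k d V →
    ∀ χ : Set (Word k) → Fin r, ∃ W : Set (Word k), IsSubspace k (n + 1) W ∧ W ⊆ V ∧
      ∀ S T : Set (Word k), IsSubspace k m S → S ⊆ W → IsSubspace k m T → T ⊆ W →
        χ S = χ T

namespace IsGrahamRothschildBound

variable {m r : ℕ} {g : ℕ → ℕ}

theorem lt_apply (hk : 2 ≤ k) (hr : 0 < r) (hg : IsGrahamRothschildBound k m r g) {n : ℕ}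
    (hn : m - 1 ≤ n) : n < g n := by
  obtain ⟨V, hV⟩ := exists_isSubspace k (g n)
  obtain ⟨W, hW, hWV, -⟩ := hg n hn (g n) le_rfl V hV fun _ => ⟨0, hr⟩
  exact hW.le_of_subset hk hV hWV

theorem add_le_iterate (hk : 2 ≤ k) (hr : 0 < r) (hg : IsGrahamRothschildBound k m r g)
    (q : ℕ) : m + q ≤ g^[q] m := by
  induction q with
  | zero => rfl
  | succ q ih =>
    rw [Function.iterate_succ_apply']
    have := hg.lt_apply hk hr (n := g^[q] m) (by omega)
    omega

theorem exists_subtree (hk : 2 ≤ k) (hg : IsGrahamRothschildBound k m r g)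
    (χ : Set (Word k) → Fin r) (W : CSTree k) {n : ℕ} (hn : m - 1 ≤ n) (hW : g n ≤ W.dim) :
    ∃ W₁ : CSTree k, W₁.dim = n + 1 ∧ W₁.carrier ⊆ W.carrier ∧
      W₁.level (n + 1) ⊆ W.level W.dim ∧ TreeMonochromatic χ m (W₁.level (n + 1)) := by
  obtain ⟨X, hX, hXW, hXmono⟩ :=
    hg n hn W.dim hW _ (W.isSubspace_level (by omega) le_rfl) (levelColoring χ m)
  obtain ⟨W₁, hdim, hcar, htop⟩ := CSTree.exists_subtree_level_subset hk n.succ_pos hX hXW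
  refine ⟨W₁, hdim, hcar, htop.trans hXW, TreeMonochromatic.subset ?_ htop⟩
  intro S T hS hT hSX hTX
  rw [← levelColoring_level hk χ hS, ← levelColoring_level hk χ hT]
  exact hXmono _ _ (S.isSubspace_level (by omega) hS.ge) hSX
    (T.isSubspace_level (by omega) hT.ge) hTX

/-- An `(n + 1)`-dimensional subtree `W₁` with monochromatic top level, `n = g^{(q)}(m)`, is
found first; the induction hypothesis is applied to the first `n`
levels of `W₁`, and the subtree obtained is extended by the last level of `W₁`. -/
theorem exists_subtree_levels (hk : 2 ≤ k) (hg : IsGrahamRothschildBound k m r g)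
    (χ : Set (Word k) → Fin r) {q : ℕ} (hq : 1 ≤ q) (W : CSTree k) (hW : g^[q] m ≤ W.dim) :
    ∃ U : CSTree k, U.dim = m + q ∧ U.carrier ⊆ W.carrier ∧
      U.level (m + q) ⊆ W.level W.dim ∧
      ∀ i, m ≤ i → i ≤ m + q → TreeMonochromatic χ m (U.level i) := by
  induction q, hq using Nat.le_induction generalizing W with
  | base =>
    obtain ⟨W₁, hdim, hcar, htop, hmono⟩ := hg.exists_subtree hk χ W (Nat.sub_le m 1) hW
    refine ⟨W₁, hdim, hcar, htop, fun i hi hi' => ?_⟩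
    rcases (show i = m ∨ i = m + 1 by omega) with rfl | rfl
    · exact treeMonochromatic_level hk χ W₁ (by omega)
    · exact hmono
  | succ q hq ih =>
    have hn := hg.add_le_iterate hk (χ ∅).pos q
    obtain ⟨W₁, hdim, hcar, htop, hmono⟩ := hg.exists_subtree hk χ W (n := g^[q] m)
      (by omega) (by rwa [← Function.iterate_succ_apply' g q m])
    obtain ⟨U, hUdim, hUcar, hUtop, hUmono⟩ :=
      ih (W₁.truncate (g^[q] m) (by omega) (by omega)) le_rfl
    have hw := W₁.left (g^[q] m) (by omega)
    rw [← hUdim] at hUtop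
    have htop' := CSTree.snoc_level_succ_subset hw hUtop
    refine ⟨U.snoc _ hw, show U.dim + 1 = _ by omega, ?_, ?_, fun i hi hi' => ?_⟩
    · exact (CSTree.snoc_carrier_subset hw (by omega)
        (hUcar.trans (CSTree.truncate_carrier_subset _ _)) hUtop).trans hcar
    · rw [show m + (q + 1) = U.dim + 1 by omega]
      exact htop'.trans (hdim ▸ htop)
    · rcases (show i ≤ U.dim ∨ i = U.dim + 1 by omega) with hi' | rfl
      · rw [CSTree.snoc_level hw hi']
        exact hUmono i hi (by omega)
      · exact hmono.subset htop'

end IsGrahamRothschildBound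

end Ramsey

theorem cs_tree_depth_coloring_general (k m r : ℕ) (hk : 2 ≤ k)
    (g : ℕ → ℕ)
    (hg : ∀ n, m - 1 ≤ n → ∀ d, g n ≤ d → ∀ V : Set (Word k), IsSubspace k d V →
      ∀ χ : Set (Word k) → Fin r, ∃ W : Set (Word k), IsSubspace k (n + 1) W ∧ W ⊆ V ∧
        ∀ S T : Set (Word k), IsSubspace k m S → S ⊆ W → IsSubspace k m T → T ⊆ W →
          χ S = χ T) :
    ∀ q n : ℕ, 1 ≤ q → g^[q] m ≤ n →
      ∀ W : CSTree k, W.dim = n → ∀ χ : Set (Word k) → Fin r,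
        ∃ U : CSTree k, U.dim = m + q ∧ U.carrier ⊆ W.carrier ∧
          U.level U.dim ⊆ W.level W.dim ∧
          ∀ S T : CSTree k, S.dim = m → T.dim = m →
            S.carrier ⊆ U.carrier → T.carrier ⊆ U.carrier →
            (∃ i : ℕ, S.level m ⊆ U.level i ∧ T.level m ⊆ U.level i) →
            χ S.carrier = χ T.carrier := by
  rintro q n hq hn W rfl χ
  obtain ⟨U, hdim, hcar, htop, hmono⟩ :=
    IsGrahamRothschildBound.exists_subtree_levels hk hg χ hq W hn
  refine ⟨U, hdim, hcar, hdim ▸ htop, fun S T hS hT hSU hTU ⟨i, hSi, hTi⟩ => ?_⟩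
  have hsub : ∀ S' : CSTree k, S'.dim = m → S'.carrier ⊆ U.carrier →
      S'.level m ⊆ U.level i → S'.level m ⊆ U.level (min i U.dim) :=
    fun S' hS' hcar' hi _ hx =>
      CSTree.mem_level_min_dim (hi hx) (hcar' (CSTree.level_subset_carrier hS'.ge hx))
  have hmi : m ≤ min i U.dim := (S.isSubspace_level (by omega) hS.ge).le_of_subset hk
    (U.isSubspace_level (by omega) (min_le_right _ _)) (hsub S hS hSU hSi)
  exact hmono _ hmi (hdim ▸ min_le_right _ _) S T hS hT (hsub S hS hSU hSi) (hsub T hT hTU hTi)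

/-- Lemma 4.4 (with the Graham–Rothschild numbers abstracted into a function `g`):
given `g : ℕ → ℕ` vanishing below `m - 1` and such that for `n ≥ m - 1` every
combinatorial subspace of dimension `≥ g n` admits, for every `r`-coloring of its
`m`-dimensional subspaces, an `(n+1)`-dimensional subspace whose `m`-dimensional
subspaces are monochromatic, then for `q ≥ 1` and `n ≥ g^{(q)}(m)`, every `r`-coloring
of the `m`-dimensional Carlson–Simpson subtrees of an `n`-dimensional Carlson–Simpson
tree `W` admits `U ∈ Subtr^{max}_{m+q}(W)` such that subtrees of equal depth in `U`
get equal colors. -/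
theorem cs_tree_depth_coloring (k m r : ℕ) (hk : 2 ≤ k) (hm : 1 ≤ m) (hr : 1 ≤ r)
    (g : ℕ → ℕ) (hg0 : ∀ n, n < m - 1 → g n = 0)
    (hg : ∀ n, m - 1 ≤ n → ∀ d, g n ≤ d → ∀ V : Set (Word k), IsSubspace k d V →
      ∀ χ : Set (Word k) → Fin r, ∃ W : Set (Word k), IsSubspace k (n + 1) W ∧ W ⊆ V ∧
        ∀ S T : Set (Word k), IsSubspace k m S → S ⊆ W → IsSubspace k m T → T ⊆ W →
          χ S = χ T) :
    ∀ q n : ℕ, 1 ≤ q → g^[q] m ≤ n →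
      ∀ W : CSTree k, W.dim = n → ∀ χ : Set (Word k) → Fin r,
        ∃ U : CSTree k, U.dim = m + q ∧ U.carrier ⊆ W.carrier ∧
          U.level U.dim ⊆ W.level W.dim ∧
          ∀ S T : CSTree k, S.dim = m → T.dim = m →
            S.carrier ⊆ U.carrier → T.carrier ⊆ U.carrier →
            (∃ i : ℕ, S.level m ⊆ U.level i ∧ T.level m ⊆ U.level i) →
            χ S.carrier = χ T.carrier :=
  cs_tree_depth_coloring_general k m r hk g hg
end

section
/- Let (Ω,Σ,μ) be a probability space and 0 < λ, β, ε ≤ 1. Let A and B be measurable events with A ⊆ B, μ(A) ≥ λ μ(B) and μ(B) ≥ β. Suppose Q_1,…,Q_n are pairwise disjoint measurable events with μ(B ∖ ⋃_{i=1}^n Q_i) ≤ εβ/2 and μ(Q_i) > 0 for every i. Then, setting I = { i ∈ {1,…,n} : μ_{Q_i}(A) ≥ (λ − ε) μ_{Q_i}(B) and μ_{Q_i}(B) ≥ βε/4 }, we have Σ_{i∈I} μ(Q_i) ≥ βε/4. In particular, if μ(Q_i) = μ(Q_j) for all i, j, then |I| ≥ (βε/4) n. -/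
open MeasureTheory Finset Function

/-!
Write `U = ⋃ i, Q i`. A set `S ∈ {A, B}` is covered by `S \ U` (of measure at most `εβ/2`), by
the pieces `Q i` with `i ∈ I`, and by the pieces with `i ∉ I`, on which a failed density condition
bounds `μ(S ∩ Q i)` by `c μ(B ∩ Q i) + (βε/4) μ(Q i)`; by disjointness these last pieces contribute
at most `c μ(B) + βε/4`. If `ε < λ`, take `S = A` and `c = λ - ε`: then `λ μ(B) ≤ μ(A)` leaves
`ε μ(B) - 3εβ/4 ≥ βε/4` for the indices in `I`. If `λ ≤ ε`, the first density condition always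
holds, so take `S = B` and `c = 0`, which leaves `β - 3βε/4 ≥ βε/4`.
-/

theorem le_mul_add_mul_of_lt_or_lt {a b c d q : ℝ} (hab : a ≤ b) (ha : 0 ≤ a) (hc : 0 ≤ c)
    (hdq : 0 ≤ d * q) (h : a < c * b ∨ b < d * q) : a ≤ c * b + d * q := by
  have hcb : 0 ≤ c * b := mul_nonneg hc (ha.trans hab)
  rcases h with h | h <;> linarith

theorem le_mul_of_lt_or_lt {a b c d q : ℝ} (hc : c ≤ 0) (ha : 0 ≤ a) (hb : 0 ≤ b)
    (h : a < c * b ∨ b < d * q) : b ≤ d * q := by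
  have hcb : c * b ≤ 0 := mul_nonpos_of_nonpos_of_nonneg hc hb
  rcases h with h | h <;> linarith

namespace MeasureTheory

variable {ι Ω : Type*} [MeasurableSpace Ω] {μ : Measure Ω} {Q : ι → Set Ω}

theorem measureReal_le_diff_iUnion_add_sum_inter [Fintype ι] (S : Set Ω) :
    μ.real S ≤ μ.real (S \ ⋃ i, Q i) + ∑ i, μ.real (S ∩ Q i) :=
  calc μ.real S = μ.real ((S \ ⋃ i, Q i) ∪ ⋃ i, S ∩ Q i) := by
        rw [← Set.inter_iUnion, Set.sdiff_union_inter]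
    _ ≤ μ.real (S \ ⋃ i, Q i) + μ.real (⋃ i, S ∩ Q i) := measureReal_union_le _ _
    _ ≤ μ.real (S \ ⋃ i, Q i) + ∑ i, μ.real (S ∩ Q i) := by
        gcongr; exact measureReal_iUnion_fintype_le _

theorem sum_measureReal_inter_le [IsFiniteMeasure μ] (hQm : ∀ i, MeasurableSet (Q i))
    (hQd : Pairwise (Disjoint on Q)) (S : Set Ω) (t : Finset ι) :
    ∑ i ∈ t, μ.real (S ∩ Q i) ≤ μ.real S := by
  have h := sum_measureReal_le_measureReal_univ (μ := μ.restrict S) (s := t)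
    (fun i _ => hQm i) (fun i _ j _ hij => hQd hij)
  simpa [measureReal_restrict_apply (hQm _), Set.inter_comm] using h

theorem measureReal_le_sum_add_of_forall_notMem [Fintype ι] [DecidableEq ι]
    [IsFiniteMeasure μ] (hQm : ∀ i, MeasurableSet (Q i)) (hQd : Pairwise (Disjoint on Q))
    {S B : Set Ω} {I : Finset ι} {c δ : ℝ} (hc : 0 ≤ c) (hδ : 0 ≤ δ)
    (h : ∀ i ∉ I, μ.real (S ∩ Q i) ≤ c * μ.real (B ∩ Q i) + δ * μ.real (Q i)) :
    μ.real S ≤ μ.real (S \ ⋃ i, Q i) + ∑ i ∈ I, μ.real (Q i) + c * μ.real B +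
      δ * μ.real Set.univ :=
  calc μ.real S
      ≤ μ.real (S \ ⋃ i, Q i) +
          (∑ i ∈ I, μ.real (S ∩ Q i) + ∑ i ∈ Iᶜ, μ.real (S ∩ Q i)) := by
        rw [sum_add_sum_compl]; exact measureReal_le_diff_iUnion_add_sum_inter S
    _ ≤ μ.real (S \ ⋃ i, Q i) + (∑ i ∈ I, μ.real (Q i) +
          ∑ i ∈ Iᶜ, (c * μ.real (B ∩ Q i) + δ * μ.real (Q i))) := by
        gcongr (_ + (?_ + ?_))
        · exact sum_le_sum fun i _ => measureReal_mono Set.inter_subset_right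
        · exact sum_le_sum fun i hi => h i (mem_compl.1 hi)
    _ = μ.real (S \ ⋃ i, Q i) + ∑ i ∈ I, μ.real (Q i) +
          c * ∑ i ∈ Iᶜ, μ.real (B ∩ Q i) + δ * ∑ i ∈ Iᶜ, μ.real (Set.univ ∩ Q i) := by
        simp only [sum_add_distrib, mul_sum, Set.univ_inter]; ring
    _ ≤ μ.real (S \ ⋃ i, Q i) + ∑ i ∈ I, μ.real (Q i) + c * μ.real B +
          δ * μ.real Set.univ := by
        gcongr <;> exact sum_measureReal_inter_le hQm hQd _ _

theorem mul_card_le_card_of_measure_eq [Fintype ι] [IsProbabilityMeasure μ]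
    (hQm : ∀ i, MeasurableSet (Q i)) (hQd : Pairwise (Disjoint on Q))
    (heq : ∀ i j, μ (Q i) = μ (Q j)) {I : Finset ι} {x : ℝ}
    (hx : x ≤ ∑ i ∈ I, μ.real (Q i)) : x * Fintype.card ι ≤ #I :=
  calc x * Fintype.card ι = ∑ _j : ι, x := by simp [mul_comm]
    _ ≤ ∑ j : ι, ∑ i ∈ I, μ.real (Q i) := sum_le_sum fun _ _ => hx
    _ = ∑ i ∈ I, ∑ j : ι, μ.real (Q j) := by
        rw [sum_comm]
        exact sum_congr rfl fun i _ => sum_congr rfl fun j _ => by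
          rw [measureReal_def, measureReal_def, heq i j]
    _ ≤ ∑ _i ∈ I, (1 : ℝ) := by
        gcongr with i
        simpa using sum_measureReal_le_measureReal_univ (μ := μ) (s := univ)
          (fun i _ => hQm i) (fun i _ j _ hij => hQd hij)
    _ = #I := by simp

end MeasureTheory

theorem conditional_density_selection_general {Ω : Type*} [MeasurableSpace Ω]
    (μ : Measure Ω) [IsProbabilityMeasure μ]
    (lam β ε : ℝ) (hβ0 : 0 < β)
    (hε0 : 0 < ε) (hε1 : ε ≤ 1)
    (A B : Set Ω) (hAB : A ⊆ B)
    (hA : lam * (μ B).toReal ≤ (μ A).toReal) (hB : β ≤ (μ B).toReal)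
    (n : ℕ) (Q : Fin n → Set Ω) (hQm : ∀ i, MeasurableSet (Q i))
    (hQdisj : ∀ i j, i ≠ j → Disjoint (Q i) (Q j))
    (hQpos : ∀ i, 0 < (μ (Q i)).toReal)
    (hQcover : (μ (B \ ⋃ i, Q i)).toReal ≤ ε * β / 2)
    (I : Finset (Fin n))
    (hI : ∀ i : Fin n, i ∈ I ↔
      ((lam - ε) * ((μ (B ∩ Q i)).toReal / (μ (Q i)).toReal) ≤
          (μ (A ∩ Q i)).toReal / (μ (Q i)).toReal ∧
        β * ε / 4 ≤ (μ (B ∩ Q i)).toReal / (μ (Q i)).toReal)) :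
    β * ε / 4 ≤ ∑ i ∈ I, (μ (Q i)).toReal ∧
      ((∀ i j : Fin n, μ (Q i) = μ (Q j)) → β * ε / 4 * n ≤ (I.card : ℝ)) := by
  simp only [← measureReal_def] at hA hB hQpos hQcover hI ⊢
  have hQd : Pairwise (Disjoint on Q) := fun i j hij => hQdisj i j hij
  have hnotMem : ∀ i ∉ I, μ.real (A ∩ Q i) < (lam - ε) * μ.real (B ∩ Q i) ∨
      μ.real (B ∩ Q i) < β * ε / 4 * μ.real (Q i) := fun i hi => by
    rw [hI, mul_div_assoc', div_le_div_iff_of_pos_right (hQpos i), le_div_iff₀ (hQpos i)] at hi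
    simpa only [not_and_or, not_le] using hi
  have hδ : 0 ≤ β * ε / 4 := by positivity
  have hmass : β * ε / 4 ≤ ∑ i ∈ I, μ.real (Q i) := by
    rcases lt_or_ge ε lam with hlt | hle
    · have hA_le := measureReal_le_sum_add_of_forall_notMem hQm hQd (sub_nonneg.2 hlt.le) hδ
        fun i hi => le_mul_add_mul_of_lt_or_lt
          (measureReal_mono (Set.inter_subset_inter_left _ hAB)) measureReal_nonneg
          (sub_nonneg.2 hlt.le) (by positivity) (hnotMem i hi)
      have hAU : μ.real (A \ ⋃ i, Q i) ≤ μ.real (B \ ⋃ i, Q i) :=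
        measureReal_mono (Set.sdiff_subset_sdiff_left hAB)
      rw [probReal_univ] at hA_le
      nlinarith [mul_le_mul_of_nonneg_left hB hε0.le]
    · have hB_le :=
        measureReal_le_sum_add_of_forall_notMem (S := B) (B := B) hQm hQd le_rfl hδ fun i hi => by
          simpa using le_mul_of_lt_or_lt (sub_nonpos.2 hle) measureReal_nonneg measureReal_nonneg
            (hnotMem i hi)
      rw [probReal_univ] at hB_le
      nlinarith
  exact ⟨hmass, fun heq => by simpa using mul_card_le_card_of_measure_eq hQm hQd heq hmass⟩

/-- Lemma 2.6: conditional densities on an almost-cover by pairwise disjoint events.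
Here `μ_{Q}(A)` is the conditional probability `μ(A ∩ Q)/μ(Q)` (computed via `toReal`),
and `I` is the set of indices `i` for which `μ_{Q i}(A) ≥ (λ - ε) μ_{Q i}(B)` and
`μ_{Q i}(B) ≥ βε/4`. -/
theorem conditional_density_selection {Ω : Type*} [MeasurableSpace Ω]
    (μ : Measure Ω) [IsProbabilityMeasure μ]
    (lam β ε : ℝ) (hlam0 : 0 < lam) (hlam1 : lam ≤ 1) (hβ0 : 0 < β) (hβ1 : β ≤ 1)
    (hε0 : 0 < ε) (hε1 : ε ≤ 1)
    (A B : Set Ω) (hAm : MeasurableSet A) (hBm : MeasurableSet B) (hAB : A ⊆ B)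
    (hA : lam * (μ B).toReal ≤ (μ A).toReal) (hB : β ≤ (μ B).toReal)
    (n : ℕ) (Q : Fin n → Set Ω) (hQm : ∀ i, MeasurableSet (Q i))
    (hQdisj : ∀ i j, i ≠ j → Disjoint (Q i) (Q j))
    (hQpos : ∀ i, 0 < (μ (Q i)).toReal)
    (hQcover : (μ (B \ ⋃ i, Q i)).toReal ≤ ε * β / 2)
    (I : Finset (Fin n))
    (hI : ∀ i : Fin n, i ∈ I ↔
      ((lam - ε) * ((μ (B ∩ Q i)).toReal / (μ (Q i)).toReal) ≤
          (μ (A ∩ Q i)).toReal / (μ (Q i)).toReal ∧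
        β * ε / 4 ≤ (μ (B ∩ Q i)).toReal / (μ (Q i)).toReal)) :
    β * ε / 4 ≤ ∑ i ∈ I, (μ (Q i)).toReal ∧
      ((∀ i j : Fin n, μ (Q i) = μ (Q j)) → β * ε / 4 * n ≤ (I.card : ℝ)) :=
  conditional_density_selection_general μ lam β ε hβ0 hε0 hε1 A B hAB hA hB n Q hQm hQdisj hQpos
    hQcover I hI
end

section
/- Let 0 < θ < ε ≤ 1 and let n ∈ ℕ with n ≥ (ε² − θ²)^{−1}. If A_1,…,A_n are measurable events in a probability space (Ω,Σ,μ) satisfying μ(A_i) ≥ ε for every i ∈ {1,…,n}, then there exist i, j ∈ {1,…,n} with i ≠ j such that μ(A_i ∩ A_j) ≥ θ². -/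
/-!
Let `f = ∑ i, 𝟙_{A i}` count the events containing a point. Then `∫ f ≥ n ε`, while
`∫ f² = ∑ i j, μ (A i ∩ A j)`. If every off-diagonal term were below `θ²`, Cauchy–Schwarz
`(∫ f)² ≤ ∫ f²` would give `n² ε² ≤ n + n (n - 1) θ²`, i.e. `n (ε² - θ²) < 1`.
-/

open MeasureTheory ProbabilityTheory Finset

section

variable {Ω ι : Type*} [MeasurableSpace Ω] {μ : Measure Ω} [Fintype ι] {A : ι → Set Ω}

theorem sq_integral_le_integral_sq [IsProbabilityMeasure μ] {X : Ω → ℝ} (hX : MemLp X 2 μ) :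
    (∫ ω, X ω ∂μ) ^ 2 ≤ ∫ ω, X ω ^ 2 ∂μ := by
  have h := variance_nonneg X μ
  rw [variance_eq_sub hX] at h
  simp only [Pi.pow_apply] at h
  linarith

theorem integral_sum_indicator_one [IsFiniteMeasure μ] (hA : ∀ i, MeasurableSet (A i)) :
    ∫ ω, ∑ i, (A i).indicator 1 ω ∂μ = ∑ i, μ.real (A i) := by
  rw [integral_finsetSum _ fun i _ => (integrable_const 1).indicator (hA i)]
  exact sum_congr rfl fun i _ => integral_indicator_one (hA i)

theorem integral_sq_sum_indicator_one [IsFiniteMeasure μ] (hA : ∀ i, MeasurableSet (A i)) :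
    ∫ ω, (∑ i, (A i).indicator 1 ω) ^ 2 ∂μ = ∑ i, ∑ j, μ.real (A i ∩ A j) := by
  have hmeas : ∀ i j, MeasurableSet (A i ∩ A j) := fun i j => (hA i).inter (hA j)
  have hexpand : ∀ ω, (∑ i, (A i).indicator (1 : Ω → ℝ) ω) ^ 2
      = ∑ i, ∑ j, (A i ∩ A j).indicator 1 ω := fun ω => by
    simp only [sq, sum_mul_sum, Set.inter_indicator_one, Pi.mul_apply]
  simp only [hexpand]
  rw [integral_finsetSum _ fun i _ => integrable_finsetSum _
    fun j _ => (integrable_const 1).indicator (hmeas i j)]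
  refine sum_congr rfl fun i _ => ?_
  rw [integral_finsetSum _ fun j _ => (integrable_const 1).indicator (hmeas i j)]
  exact sum_congr rfl fun j _ => integral_indicator_one (hmeas i j)

theorem sq_sum_measureReal_le_sum_sum_measureReal_inter [IsProbabilityMeasure μ]
    (hA : ∀ i, MeasurableSet (A i)) :
    (∑ i, μ.real (A i)) ^ 2 ≤ ∑ i, ∑ j, μ.real (A i ∩ A j) := by
  have hmem : MemLp (fun ω => ∑ i, (A i).indicator (1 : Ω → ℝ) ω) 2 μ :=
    memLp_finsetSum _ fun i _ => memLp_indicator_const 2 (hA i) 1 (.inr (measure_ne_top μ _))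
  rw [← integral_sum_indicator_one hA, ← integral_sq_sum_indicator_one hA]
  exact sq_integral_le_integral_sq hmem

end

theorem sum_sum_le_of_diag_le_of_offDiag_le {ι : Type*} [Fintype ι] (a : ι → ι → ℝ) {c d : ℝ}
    (hdiag : ∀ i, a i i ≤ c) (hoff : ∀ i j, i ≠ j → a i j ≤ d) :
    ∑ i, ∑ j, a i j ≤ Fintype.card ι * (c + (Fintype.card ι - 1) * d) := by
  classical
  calc ∑ i, ∑ j, a i j = ∑ i, (a i i + ∑ j ∈ univ.erase i, a i j) := by
        simp only [add_sum_erase _ _ (mem_univ _)]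
    _ ≤ ∑ _i : ι, (c + (Fintype.card ι - 1) * d) := by
        refine sum_le_sum fun i _ => add_le_add (hdiag i) ?_
        calc ∑ j ∈ univ.erase i, a i j ≤ ∑ _j ∈ univ.erase i, d :=
              sum_le_sum fun j hj => hoff i j (ne_of_mem_erase hj).symm
          _ = (Fintype.card ι - 1) * d := by
              rw [sum_const, card_erase_of_mem (mem_univ i), card_univ, nsmul_eq_mul,
                Nat.cast_pred (Fintype.card_pos_iff.mpr ⟨i⟩)]
    _ = Fintype.card ι * (c + (Fintype.card ι - 1) * d) := by
        rw [sum_const, card_univ, nsmul_eq_mul]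

theorem exists_large_pairwise_intersection_general {Ω : Type*} [MeasurableSpace Ω]
    (μ : Measure Ω) [IsProbabilityMeasure μ]
    (θ ε : ℝ) (hθ0 : 0 < θ) (hθε : θ < ε)
    (n : ℕ) (hn : (ε ^ 2 - θ ^ 2)⁻¹ ≤ (n : ℝ))
    (A : Fin n → Set Ω) (hAm : ∀ i, MeasurableSet (A i))
    (hA : ∀ i, ε ≤ (μ (A i)).toReal) :
    ∃ i j : Fin n, i ≠ j ∧ θ ^ 2 ≤ (μ (A i ∩ A j)).toReal := by
  by_contra! hsmall
  have hgap : 0 < ε ^ 2 - θ ^ 2 := by nlinarith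
  have hn_gap : 1 ≤ n * (ε ^ 2 - θ ^ 2) := (inv_le_iff_one_le_mul₀ hgap).mp hn
  have hsum : n * ε ≤ ∑ i, μ.real (A i) := by
    simpa [mul_comm, measureReal_def] using sum_le_sum fun i (_ : i ∈ univ) => hA i
  have hpairs : ∑ i, ∑ j, μ.real (A i ∩ A j) ≤ n * (1 + (n - 1) * θ ^ 2) := by
    simpa using sum_sum_le_of_diag_le_of_offDiag_le (fun i j => μ.real (A i ∩ A j))
      (fun i => measureReal_le_one) (fun i j hij => (hsmall i j hij).le)
  have hsq := sq_sum_measureReal_le_sum_sum_measureReal_inter (μ := μ) hAm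
  have hn0 : (0 : ℝ) < n := by nlinarith
  nlinarith [pow_le_pow_left₀ (mul_nonneg hn0.le (hθ0.trans hθε).le) hsum 2, pow_pos hθ0 2]

/-- Lemma 2.7: among `n ≥ (ε² - θ²)⁻¹` events each of measure at least `ε` in a
probability space, two of them intersect in measure at least `θ²`. -/
theorem exists_large_pairwise_intersection {Ω : Type*} [MeasurableSpace Ω]
    (μ : Measure Ω) [IsProbabilityMeasure μ]
    (θ ε : ℝ) (hθ0 : 0 < θ) (hθε : θ < ε) (hε1 : ε ≤ 1)
    (n : ℕ) (hn : (ε ^ 2 - θ ^ 2)⁻¹ ≤ (n : ℝ))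
    (A : Fin n → Set Ω) (hAm : ∀ i, MeasurableSet (A i))
    (hA : ∀ i, ε ≤ (μ (A i)).toReal) :
    ∃ i j : Fin n, i ≠ j ∧ θ ^ 2 ≤ (μ (A i ∩ A j)).toReal :=
  exists_large_pairwise_intersection_general μ θ ε hθ0 hθε n hn A hAm hA
end

section
/- Let k ∈ ℕ with k ≥ 2 and let L be a finite subset of ℕ with |L| ≥ 2. Then for every subset A of [k]^{<ℕ} there exists a Carlson–Simpson tree W of [k]^{<ℕ} of dimension |L| − 1 with level set L(W) = L such that d^W_{FW}(A) ≥ d_L(A). -/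
/-- The common length `ℓ_n` of the words in the `n`-th level of `W`. -/
def CSTree.levelLen {k : ℕ} (W : CSTree k) (n : ℕ) : ℕ :=
  W.c.length + ∑ i ∈ Finset.range n, (W.ws i).length

/-- The level set `L(W) = {ℓ_0 < … < ℓ_{dim W}}` of `W`. -/
def CSTree.levelSet {k : ℕ} (W : CSTree k) : Finset ℕ :=
  (Finset.range (W.dim + 1)).image W.levelLen

/-- The Furstenberg–Weiss measure of `A` associated to the Carlson–Simpson tree `W`:
`d^W_FW(A) = avg_{n ≤ dim W} dens_{W(n)}(A)`. -/
noncomputable def fwDens {k : ℕ} (W : CSTree k) (A : Set (Word k)) : ℝ :=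
  (∑ n ∈ Finset.range (W.dim + 1),
    (Set.ncard (A ∩ W.level n) : ℝ) / (Set.ncard (W.level n) : ℝ)) / (W.dim + 1)

/-- The generalized Furstenberg–Weiss measure `d_L(A) = avg_{n ∈ L} dens_{[k]^n}(A)`. -/
noncomputable def genFwDens (k : ℕ) (L : Finset ℕ) (A : Set (Word k)) : ℝ :=
  (∑ n ∈ L, (Set.ncard {x ∈ A | x.length = n} : ℝ) / (k : ℝ) ^ n) / L.card

open Finset

namespace CSTree

variable {k : ℕ} (W : CSTree k)

def word (n : ℕ) (a : Fin n → Fin k) : Word k :=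
  W.c ++ (List.ofFn fun i : Fin n => subst (W.ws i) (a i)).flatten

theorem word_succ (n : ℕ) (a : Fin (n + 1) → Fin k) :
    W.word (n + 1) a = W.word n (Fin.init a) ++ subst (W.ws n) (a (Fin.last n)) := by
  simp only [word, List.ofFn_succ', List.concat_eq_append, List.flatten_append,
    List.flatten_singleton, List.append_assoc, Fin.init, Fin.val_castSucc, Fin.val_last]

theorem length_word (n : ℕ) (a : Fin n → Fin k) : (W.word n a).length = W.levelLen n := by
  simp [word, levelLen, subst, List.length_flatten, List.sum_ofFn,
    ← Fin.sum_univ_eq_sum_range (fun i => (W.ws i).length)]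

theorem word_injective {n : ℕ} (hn : n ≤ W.dim) : Function.Injective (W.word n) := by
  induction n with
  | zero => exact fun a b _ => Subsingleton.elim a b
  | succ n ih =>
    intro a b hab
    rw [word_succ, word_succ] at hab
    obtain ⟨hinit, hlast⟩ := List.append_inj hab (by rw [length_word, length_word])
    -- the block of a left variable word starts with the substituted letter
    have hhead : ∀ x : Fin k, (subst (W.ws n) x).head? = some x := fun x => by
      have hleft : (W.ws n).head? = some none := W.left n (by omega)
      simp [subst, List.head?_map, hleft]
    have hlast' : a (Fin.last n) = b (Fin.last n) := by
      simpa [hhead] using congrArg List.head? hlast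
    rw [← Fin.snoc_init_self a, ← Fin.snoc_init_self b, ih (by omega) hinit, hlast']

theorem level_eq_range [NeZero k] (n : ℕ) : W.level n = Set.range (W.word n) := by
  have hword : ∀ a : ℕ → Fin k, W.c ++ ((List.range n).map fun i => subst (W.ws i) (a i)).flatten
      = W.word n (fun i => a i) := fun a => by
    congr 2
    exact List.ext_getElem (by simp) (by simp)
  ext x
  constructor
  · rintro ⟨a, rfl⟩
    exact ⟨_, (hword a).symm⟩
  · rintro ⟨a, rfl⟩
    refine ⟨fun i => if h : i < n then a ⟨i, h⟩ else 0, ?_⟩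
    rw [hword]
    simp

theorem ncard_level [NeZero k] {n : ℕ} (hn : n ≤ W.dim) : (W.level n).ncard = k ^ n := by
  rw [level_eq_range, ← Set.image_univ, Set.ncard_image_of_injective _ (W.word_injective hn),
    Set.ncard_univ, Nat.card_eq_fintype_card, Fintype.card_fun, Fintype.card_fin,
    Fintype.card_fin]

open Classical in
theorem ncard_inter_level [NeZero k] {n : ℕ} (hn : n ≤ W.dim) (A : Set (Word k)) :
    (A ∩ W.level n).ncard = #{a | W.word n a ∈ A} := by
  rw [level_eq_range, ← Set.image_preimage_eq_inter_range,
    Set.ncard_image_of_injective _ (W.word_injective hn), ← Set.ncard_coe_finset]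
  congr 1
  ext a
  simp

end CSTree

theorem sum_card_filter_div_card_eq_of_equiv {Ω I X Y : Type*} [Fintype Ω] [Fintype I]
    [Fintype X] [Fintype Y] [Nonempty I] (Φ : Ω × I ≃ X × Y) (P : X → Prop) [DecidablePred P] :
    ∑ ω, (#{i | P (Φ (ω, i)).1} : ℝ) / Fintype.card I =
      Fintype.card Ω * ((#{x | P x} : ℝ) / Fintype.card X) := by
  have hcount : ∑ ω, (#{i | P (Φ (ω, i)).1} : ℝ) = Fintype.card Y * #{x | P x} := by
    simp only [card_filter, Nat.cast_sum, Nat.cast_ite, Nat.cast_one, Nat.cast_zero]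
    rw [← Fintype.sum_prod_type', Φ.sum_comp (fun z => if P z.1 then (1 : ℝ) else 0),
      Fintype.sum_prod_type, mul_sum]
    refine sum_congr rfl fun x _ => ?_
    split_ifs <;> simp
  have hcard : (Fintype.card Ω : ℝ) * Fintype.card I = Fintype.card X * Fintype.card Y := by
    exact_mod_cast (Fintype.card_prod _ _).symm.trans
      ((Fintype.card_congr Φ).trans (Fintype.card_prod _ _))
  have hI : (Fintype.card I : ℝ) ≠ 0 := by positivity
  rw [← Finset.sum_div, hcount]
  rcases eq_or_ne (Fintype.card X) 0 with hX | hX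
  · have : #{x | P x} = 0 := Nat.eq_zero_of_le_zero ((card_filter_le _ _).trans_eq hX)
    simp [this]
  · rw [mul_div_assoc', div_eq_div_iff hI (by exact_mod_cast hX)]
    linear_combination -(#{x | P x} : ℝ) * hcard

def levelLengths (c₀ : ℕ) (e : ℕ → ℕ) (n : ℕ) : ℕ := c₀ + ∑ i ∈ range n, (e i + 1)

theorem levelLengths_strictMono (c₀ : ℕ) (e : ℕ → ℕ) : StrictMono (levelLengths c₀ e) :=
  strictMono_nat_of_lt_succ fun n => by simp [levelLengths, sum_range_succ]

/-- A point of the `n`-th level of a seed's tree: the stem, the constant letters of the first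
`n` variable words, and the letters substituted for their variables. -/
abbrev Core (k c₀ : ℕ) (e : ℕ → ℕ) (n : ℕ) :=
  (Fin c₀ → Fin k) × ((i : Fin n) → Fin (e i) → Fin k) × (Fin n → Fin k)

namespace Core

variable {k c₀ : ℕ} {e : ℕ → ℕ} {n : ℕ}

def toWord (p : Core k c₀ e n) : Word k :=
  List.ofFn p.1 ++ (List.ofFn fun i : Fin n => p.2.2 i :: List.ofFn (p.2.1 i)).flatten

def init (p : Core k c₀ e (n + 1)) : Core k c₀ e n :=
  (p.1, fun i => p.2.1 i.castSucc, Fin.init p.2.2)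

theorem toWord_succ (p : Core k c₀ e (n + 1)) :
    p.toWord = p.init.toWord ++ (p.2.2 (Fin.last n) :: List.ofFn (p.2.1 (Fin.last n))) := by
  simp only [toWord, init, List.ofFn_succ', List.concat_eq_append, List.flatten_append,
    List.flatten_singleton, List.append_assoc, Fin.init]

theorem length_toWord (p : Core k c₀ e n) : p.toWord.length = levelLengths c₀ e n := by
  simp [toWord, levelLengths, List.length_flatten, List.sum_ofFn,
    ← Fin.sum_univ_eq_sum_range (fun i => e i + 1)]

theorem toWord_injective : Function.Injective (toWord : Core k c₀ e n → Word k) := by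
  induction n with
  | zero =>
    rintro ⟨c, x, a⟩ ⟨c', x', a'⟩ h
    simp only [toWord, List.ofFn_zero, List.flatten_nil, List.append_nil, List.ofFn_inj] at h
    simp only [h, Prod.mk.injEq, true_and]
    exact ⟨Subsingleton.elim _ _, Subsingleton.elim _ _⟩
  | succ n ih =>
    intro p q h
    rw [toWord_succ, toWord_succ] at h
    obtain ⟨hinit, hlast⟩ := List.append_inj h (by rw [length_toWord, length_toWord])
    have htail := ih hinit
    simp only [init, Prod.mk.injEq] at htail
    obtain ⟨hc, hx, ha⟩ := htail
    simp only [List.cons.injEq, List.ofFn_inj] at hlast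
    refine Prod.ext hc (Prod.ext (funext fun i => ?_) (funext fun i => ?_)) <;>
      induction i using Fin.lastCases
    exacts [hlast.2, congrFun hx _, hlast.1, congrFun ha _]

theorem card_eq : Fintype.card (Core k c₀ e n) = k ^ levelLengths c₀ e n := by
  simp only [Fintype.card_prod, Fintype.card_pi, Fintype.card_fin,
    prod_pow_eq_pow_sum, prod_const, card_univ, ← pow_add, levelLengths,
    Fin.sum_univ_eq_sum_range (fun i => e i) n, sum_add_distrib, sum_const, card_range,
    smul_eq_mul, mul_one]

theorem exists_toWord_eq {w : Word k} (hw : w.length = levelLengths c₀ e n) :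
    ∃ p : Core k c₀ e n, p.toWord = w := by
  let f : Core k c₀ e n → List.Vector (Fin k) (levelLengths c₀ e n) :=
    fun p => ⟨p.toWord, p.length_toWord⟩
  have hf : f.Bijective := (Fintype.bijective_iff_injective_and_card f).2
    ⟨fun p q h => toWord_injective (congrArg Subtype.val h),
      by rw [card_vector, card_eq, Fintype.card_fin]⟩
  obtain ⟨p, hp⟩ := hf.2 ⟨w, hw⟩
  exact ⟨p, congrArg Subtype.val hp⟩

open Classical in
theorem card_filter_toWord_mem (A : Set (Word k)) :
    #{p : Core k c₀ e n | p.toWord ∈ A} = {x ∈ A | x.length = levelLengths c₀ e n}.ncard := by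
  have hrange :
      Set.range (toWord : Core k c₀ e n → Word k) = {x | x.length = levelLengths c₀ e n} :=
    Set.ext fun w => ⟨by rintro ⟨p, rfl⟩; exact p.length_toWord, exists_toWord_eq⟩
  have hpre : ((univ.filter fun p : Core k c₀ e n => p.toWord ∈ A) : Set (Core k c₀ e n)) =
      toWord ⁻¹' A := by
    ext; simp
  rw [← Set.ncard_coe_finset, hpre, ← Set.ncard_image_of_injective _ toWord_injective,
    Set.image_preimage_eq_inter_range, hrange]
  rfl

end Core

/-- The stem and the constant letters of the `m` variable words of a Carlson–Simpson tree with
level lengths `levelLengths c₀ e`. -/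
abbrev Seed (k c₀ m : ℕ) (e : ℕ → ℕ) :=
  (Fin c₀ → Fin k) × ((i : Fin m) → Fin (e i) → Fin k)

namespace Seed

variable {k c₀ m : ℕ} {e : ℕ → ℕ}

def tree (hm : 1 ≤ m) (σ : Seed k c₀ m e) : CSTree k where
  dim := m
  c := List.ofFn σ.1
  ws i := none :: if h : i < m then List.ofFn fun j => some (σ.2 ⟨i, h⟩ j) else []
  dim_pos := hm
  left _ _ := rfl

theorem dim_tree (hm : 1 ≤ m) (σ : Seed k c₀ m e) : (σ.tree hm).dim = m := rfl

def core (σ : Seed k c₀ m e) {n : ℕ} (hn : n ≤ m) (a : Fin n → Fin k) : Core k c₀ e n :=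
  (σ.1, fun i => σ.2 (Fin.castLE hn i), a)

theorem word_tree (hm : 1 ≤ m) (σ : Seed k c₀ m e) {n : ℕ} (hn : n ≤ m) (a : Fin n → Fin k) :
    (σ.tree hm).word n a = (σ.core hn a).toWord := by
  simp only [CSTree.word, tree, core, Core.toWord, subst]
  congr 2
  rw [List.ofFn_inj]
  funext i
  simp only [show (i : ℕ) < m by omega, ↓reduceDIte, List.map_cons, Option.getD_none,
    List.map_ofFn, Function.comp_def, Option.getD_some, List.cons.injEq, List.ofFn_inj, true_and]
  rfl

theorem levelLen_tree (hm : 1 ≤ m) (σ : Seed k c₀ m e) {n : ℕ} (hn : n ≤ m) :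
    (σ.tree hm).levelLen n = levelLengths c₀ e n := by
  simp only [CSTree.levelLen, tree, levelLengths, List.length_ofFn, List.length_cons]
  congr 1
  refine sum_congr rfl fun i hi => ?_
  simp [show i < m by simp at hi; omega]

def splitEquiv {n : ℕ} (hn : n ≤ m) :
    Seed k c₀ m e × (Fin n → Fin k) ≃
      Core k c₀ e n × ((i : Fin m) → n ≤ (i : ℕ) → Fin (e i) → Fin k) where
  toFun σa := (σa.1.core hn σa.2, fun i _ => σa.1.2 i)
  invFun pt :=
    ((pt.1.1, fun i => if h : (i : ℕ) < n then pt.1.2.1 ⟨i, h⟩ else pt.2 i (not_lt.1 h)), pt.1.2.2)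
  left_inv σa := by
    ext i <;> simp only [core]
    split <;> rfl
  right_inv pt := by
    refine Prod.ext (by ext i <;> simp [core]) (funext fun i => funext fun h => ?_)
    simp [not_lt.2 h]

theorem sum_density_level [NeZero k] (hm : 1 ≤ m) {n : ℕ} (hn : n ≤ m) (A : Set (Word k)) :
    ∑ σ : Seed k c₀ m e, ((A ∩ (σ.tree hm).level n).ncard : ℝ) / ((σ.tree hm).level n).ncard =
      Fintype.card (Seed k c₀ m e) *
        (({x ∈ A | x.length = levelLengths c₀ e n}.ncard : ℝ) / k ^ levelLengths c₀ e n) := by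
  classical
  have hlevel : ∀ σ : Seed k c₀ m e, ((A ∩ (σ.tree hm).level n).ncard : ℝ) /
      ((σ.tree hm).level n).ncard =
        #{a | ((splitEquiv hn (σ, a)).1).toWord ∈ A} / Fintype.card (Fin n → Fin k) := fun σ => by
    rw [CSTree.ncard_inter_level _ hn, CSTree.ncard_level _ hn]
    simp only [word_tree hm σ hn, Fintype.card_fun, Fintype.card_fin, Nat.cast_pow]
    rfl
  rw [sum_congr rfl fun σ _ => hlevel σ,
    sum_card_filter_div_card_eq_of_equiv (splitEquiv hn) (fun p => p.toWord ∈ A),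
    Core.card_filter_toWord_mem, Core.card_eq, Nat.cast_pow]

theorem exists_genFwDens_le_fwDens [NeZero k] (hm : 1 ≤ m) (A : Set (Word k)) :
    ∃ σ : Seed k c₀ m e,
      genFwDens k ((range (m + 1)).image (levelLengths c₀ e)) A ≤ fwDens (σ.tree hm) A := by
  have hinj := (levelLengths_strictMono c₀ e).injective
  set d := genFwDens k ((range (m + 1)).image (levelLengths c₀ e)) A with hd
  have hsum : ∑ σ : Seed k c₀ m e, fwDens (σ.tree hm) A = Fintype.card (Seed k c₀ m e) * d := by
    rw [hd, genFwDens, sum_image fun _ _ _ _ h => hinj h, card_image_of_injective _ hinj,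
      card_range, mul_div_assoc', mul_sum]
    simp only [fwDens, dim_tree, ← sum_div]
    rw [sum_comm]
    push_cast
    congr 1
    exact sum_congr rfl fun n hn => sum_density_level hm (Nat.lt_succ_iff.1 (mem_range.1 hn)) A
  obtain ⟨σ, -, hσ⟩ := exists_le_of_sum_le (f := fun _ => d) univ_nonempty
    (by rw [hsum, sum_const, card_univ, nsmul_eq_mul])
  exact ⟨σ, hσ⟩

theorem levelSet_tree (hm : 1 ≤ m) (σ : Seed k c₀ m e) :
    (σ.tree hm).levelSet = (range (m + 1)).image (levelLengths c₀ e) :=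
  image_congr fun _ hn => σ.levelLen_tree hm (Nat.lt_succ_iff.1 (mem_range.1 (mem_coe.1 hn)))

end Seed

theorem levelLengths_of_gaps {ℓ : ℕ → ℕ} {m : ℕ} (hℓ : ∀ i < m, ℓ i < ℓ (i + 1)) {n : ℕ}
    (hn : n ≤ m) : levelLengths (ℓ 0) (fun i => ℓ (i + 1) - ℓ i - 1) n = ℓ n := by
  induction n with
  | zero => simp [levelLengths]
  | succ n ih =>
    have := hℓ n (by omega)
    have := ih (by omega)
    simp only [levelLengths, sum_range_succ] at this ⊢
    omega

theorem exists_image_levelLengths_eq (L : Finset ℕ) {m : ℕ} (hL : L.card = m + 1) :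
    ∃ c₀ e, (range (m + 1)).image (levelLengths c₀ e) = L := by
  let ℓ : ℕ → ℕ := fun n => L.orderEmbOfFin hL (Fin.clamp n m)
  have hℓ : ∀ i < m, ℓ i < ℓ (i + 1) := fun i hi =>
    (L.orderEmbOfFin hL).strictMono (by simp [Fin.lt_def, Fin.clamp]; omega)
  refine ⟨ℓ 0, fun i => ℓ (i + 1) - ℓ i - 1, eq_of_subset_of_card_le ?_ ?_⟩
  · intro x hx
    obtain ⟨n, hn, rfl⟩ := mem_image.1 hx
    rw [levelLengths_of_gaps hℓ (Nat.lt_succ_iff.1 (mem_range.1 hn))]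
    exact L.orderEmbOfFin_mem hL _
  · rw [card_image_of_injective _ (levelLengths_strictMono _ _).injective, card_range, hL]

/-- Lemma 7.7 (second part): for every finite `L ⊆ ℕ` with `|L| ≥ 2` and every
`A ⊆ [k]^{<ℕ}` there is a Carlson–Simpson tree `W` of dimension `|L| - 1` with level
set `L` such that `d^W_FW(A) ≥ d_L(A)`. -/
theorem exists_cs_tree_fw_dens (k : ℕ) (hk : 2 ≤ k) (L : Finset ℕ) (hL : 2 ≤ L.card)
    (A : Set (Word k)) :
    ∃ W : CSTree k, W.dim = L.card - 1 ∧ W.levelSet = L ∧ genFwDens k L A ≤ fwDens W A := by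
  have : NeZero k := ⟨by omega⟩
  have hm : 1 ≤ L.card - 1 := by omega
  obtain ⟨c₀, e, hLe⟩ := exists_image_levelLengths_eq L (m := L.card - 1) (by omega)
  obtain ⟨σ, hσ⟩ := Seed.exists_genFwDens_le_fwDens (e := e) (c₀ := c₀) hm A
  exact ⟨σ.tree hm, rfl, (σ.levelSet_tree hm).trans hLe, by rwa [hLe] at hσ⟩
end

section
/- Let k ≥ 2 be an integer and 0 < δ ≤ 1, and suppose N ∈ ℕ has the property that for every finite subset L of ℕ with |L| ≥ N and every A ⊆ [k]^{<ℕ} satisfying dens_{[k]^ℓ}(A) ≥ δ for every ℓ ∈ L, the set A contains a Carlson–Simpson line of [k]^{<ℕ}. Then for every n ≥ N, every subset A of [k]^n with |A| ≥ δ k^n contains a combinatorial line of [k]^n. -/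
/-- `w` is a variable word: the variable `v` occurs in it. -/
def IsVar {k : ℕ} (w : VWord k) : Prop := none ∈ w

/-
Pad the words of `A` on the left: the set of words `p ++ x` with `x ∈ A` and `|p| < N` has, on
each of the `N` levels `n, …, n + N - 1`, exactly the density of `A` in `[k]^n`, so it contains a
Carlson–Simpson line `{c} ∪ {c ++ w(a)}`. Since `c` has length at least `n` while the words
`c ++ w(a)` are shorter than `n + N ≤ 2n`, the word `w` is shorter than `n`, and the last `n`
letters of the words `c ++ w(a)` form a combinatorial line of `[k]^n` inside `A`.
-/

theorem ncard_setOf_length_eq (k j : ℕ) : {l : Word k | l.length = j}.ncard = k ^ j := by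
  have e : {l : Word k | l.length = j} ≃ (Fin j → Fin k) := Equiv.vectorEquivFin (Fin k) j
  rw [← Nat.card_coe_set_eq, Nat.card_congr e]
  simp

theorem length_subst {k : ℕ} (w : VWord k) (a : Fin k) : (subst w a).length = w.length :=
  List.length_map _

theorem subst_drop_append {k : ℕ} (c : Word k) (w : VWord k) (m : ℕ) (a : Fin k) :
    subst ((c.map some ++ w).drop m) a = (c ++ subst w a).drop m := by
  simp [subst, List.map_drop, Function.comp_def]

theorem IsLeftVar.isVar {k : ℕ} {w : VWord k} (hw : IsLeftVar w) : IsVar w :=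
  List.mem_of_mem_head? hw

theorem IsVar.drop_append {k : ℕ} {w : VWord k} (hw : IsVar w) (c : Word k) {m : ℕ}
    (hm : m ≤ c.length) : IsVar ((c.map some ++ w).drop m) := by
  rw [IsVar, List.drop_append_of_le_length (by simpa using hm)]
  exact List.mem_append_right _ hw

def leftExtensions {k : ℕ} (N : ℕ) (A : Set (Word k)) : Set (Word k) :=
  {y | ∃ p x, p.length < N ∧ x ∈ A ∧ y = p ++ x}

section LeftExtensions

variable {k n N : ℕ} {A : Set (Word k)}

theorem leftExtensions_level_eq_image (hA : ∀ x ∈ A, x.length = n) {ℓ : ℕ} (hnℓ : n ≤ ℓ)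
    (hℓN : ℓ < n + N) :
    {y ∈ leftExtensions N A | y.length = ℓ} =
      (fun p : Word k × Word k => p.1 ++ p.2) '' ({p | p.length = ℓ - n} ×ˢ A) := by
  ext y
  constructor
  · rintro ⟨⟨p, x, -, hx, rfl⟩, hy⟩
    refine ⟨(p, x), ⟨?_, hx⟩, rfl⟩
    rw [List.length_append, hA x hx] at hy
    show p.length = ℓ - n
    omega
  · rintro ⟨⟨p, x⟩, ⟨hp : p.length = ℓ - n, hx⟩, rfl⟩
    refine ⟨⟨p, x, by omega, hx, rfl⟩, ?_⟩
    dsimp only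
    rw [List.length_append, hA x hx]
    omega

theorem ncard_leftExtensions_level (hA : ∀ x ∈ A, x.length = n) {ℓ : ℕ} (hnℓ : n ≤ ℓ)
    (hℓN : ℓ < n + N) :
    {y ∈ leftExtensions N A | y.length = ℓ}.ncard = k ^ (ℓ - n) * A.ncard := by
  have happend_injOn : Set.InjOn (fun p : Word k × Word k => p.1 ++ p.2)
      ({p | p.length = ℓ - n} ×ˢ A) := by
    rintro ⟨p₁, x₁⟩ ⟨hp₁, -⟩ ⟨p₂, x₂⟩ ⟨hp₂, -⟩ h
    obtain ⟨rfl, rfl⟩ := List.append_inj h (hp₁.trans hp₂.symm)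
    rfl
  rw [leftExtensions_level_eq_image hA hnℓ hℓN, happend_injOn.ncard_image,
    Set.ncard_prod, ncard_setOf_length_eq]

theorem dens_leftExtensions (hk : 0 < k) (hA : ∀ x ∈ A, x.length = n) {ℓ : ℕ} (hnℓ : n ≤ ℓ)
    (hℓN : ℓ < n + N) : dens k ℓ (leftExtensions N A) = A.ncard / (k : ℝ) ^ n := by
  have hkℓ : (k : ℝ) ^ ℓ = (k : ℝ) ^ (ℓ - n) * (k : ℝ) ^ n := by
    rw [← pow_add, Nat.sub_add_cancel hnℓ]
  rw [dens, ncard_leftExtensions_level hA hnℓ hℓN, hkℓ, Nat.cast_mul, Nat.cast_pow,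
    mul_div_mul_left _ _ (by positivity)]

theorem length_le_of_mem_leftExtensions (hA : ∀ x ∈ A, x.length = n) {y : Word k}
    (hy : y ∈ leftExtensions N A) : n ≤ y.length ∧ y.length < n + N := by
  obtain ⟨p, x, hp, hx, rfl⟩ := hy
  rw [List.length_append, hA x hx]
  omega

theorem drop_mem_of_mem_leftExtensions (hA : ∀ x ∈ A, x.length = n) {y : Word k}
    (hy : y ∈ leftExtensions N A) : y.drop (y.length - n) ∈ A := by
  obtain ⟨p, x, -, hx, rfl⟩ := hy
  rwa [List.length_append, hA x hx, Nat.add_sub_cancel, List.drop_left]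

theorem exists_line_of_leftExtensions_csLine (hk : 0 < k) (hA : ∀ x ∈ A, x.length = n)
    (hNn : N ≤ n) {c : Word k} {w : VWord k} (hw : IsLeftVar w) (hc : c ∈ leftExtensions N A)
    (hline : ∀ a, c ++ subst w a ∈ leftExtensions N A) :
    ∃ u : VWord k, IsVar u ∧ u.length = n ∧ {x | ∃ a, x = subst u a} ⊆ A := by
  have hlen : ∀ a, (c ++ subst w a).length = c.length + w.length := fun a => by
    rw [List.length_append, length_subst]
  have hc_len := length_le_of_mem_leftExtensions hA hc
  have hline_len := length_le_of_mem_leftExtensions hA (hline ⟨0, hk⟩)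
  rw [hlen] at hline_len
  have hm : c.length + w.length - n ≤ c.length := by omega
  refine ⟨(c.map some ++ w).drop (c.length + w.length - n), hw.isVar.drop_append _ hm, ?_, ?_⟩
  · simp only [List.length_drop, List.length_append, List.length_map]
    omega
  · rintro _ ⟨a, rfl⟩
    rw [subst_drop_append, ← hlen a]
    exact drop_mem_of_mem_leftExtensions hA (hline a)

end LeftExtensions

theorem dhj_le_dcs_general (k : ℕ) (hk : 2 ≤ k) (δ : ℝ) (N : ℕ)
    (hN : ∀ L : Finset ℕ, N ≤ L.card → ∀ A : Set (Word k),
      (∀ ℓ ∈ L, δ ≤ dens k ℓ A) →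
      ∃ (c : Word k) (w : VWord k), IsLeftVar w ∧
        insert c {x | ∃ a : Fin k, x = c ++ subst w a} ⊆ A) :
    ∀ n : ℕ, N ≤ n → ∀ A : Set (Word k), (∀ x ∈ A, x.length = n) →
      δ * (k : ℝ) ^ n ≤ (Set.ncard A : ℝ) →
      ∃ w : VWord k, IsVar w ∧ w.length = n ∧
        {x | ∃ a : Fin k, x = subst w a} ⊆ A := by
  intro n hn A hA hcard
  have hk₀ : 0 < k := by omega
  have hdense : ∀ ℓ ∈ Finset.Ico n (n + N), δ ≤ dens k ℓ (leftExtensions N A) := by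
    intro ℓ hℓ
    rw [Finset.mem_Ico] at hℓ
    rw [dens_leftExtensions hk₀ hA hℓ.1 hℓ.2, le_div_iff₀ (by positivity)]
    exact hcard
  obtain ⟨c, w, hw, hline⟩ := hN _ (by simp) _ hdense
  exact exists_line_of_leftExtensions_csLine hk₀ hA hn hw (hline (Set.mem_insert _ _))
    fun a => hline (Set.mem_insert_of_mem _ ⟨a, rfl⟩)

/-- Proposition 11.13: `DHJ(k, δ) ≤ DCS(k, 1, δ)`.  If `N` has the defining property of
`DCS(k,1,δ)` (every `A ⊆ [k]^{<ℕ}` which is `δ`-dense on a finite set of at least `N`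
levels contains a Carlson–Simpson line), then every `A ⊆ [k]^n` with `n ≥ N` and
`|A| ≥ δ kⁿ` contains a combinatorial line of `[k]^n`. -/
theorem dhj_le_dcs (k : ℕ) (hk : 2 ≤ k) (δ : ℝ) (hδ0 : 0 < δ) (hδ1 : δ ≤ 1) (N : ℕ)
    (hN : ∀ L : Finset ℕ, N ≤ L.card → ∀ A : Set (Word k),
      (∀ ℓ ∈ L, δ ≤ dens k ℓ A) →
      ∃ (c : Word k) (w : VWord k), IsLeftVar w ∧
        insert c {x | ∃ a : Fin k, x = c ++ subst w a} ⊆ A) :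
    ∀ n : ℕ, N ≤ n → ∀ A : Set (Word k), (∀ x ∈ A, x.length = n) →
      δ * (k : ℝ) ^ n ≤ (Set.ncard A : ℝ) →
      ∃ w : VWord k, IsVar w ∧ w.length = n ∧
        {x | ∃ a : Fin k, x = subst w a} ⊆ A :=
  dhj_le_dcs_general k hk δ N hN
end

section
/- For every real 0 < ε ≤ 1 and all integers k, ℓ, q, τ with k ≥ 2 and ℓ, q, τ ≥ 1 there exists an integer n with the following property: if N is a finite τ-sparse subset of ℕ with |N| ≥ n and F is a family of subsets of [k]^{<ℕ} with |F| = q, then there exists a subset L of N with |L| = ℓ such that F is (ε, τ, L)-regular. -/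
/-- `L` is `τ`-sparse: any two distinct elements of `L` differ by at least `τ`. -/
def Sparse (τ : ℕ) (L : Finset ℕ) : Prop :=
  ∀ l ∈ L, ∀ l' ∈ L, l < l' → l + τ ≤ l'

/-- The `τ`-extension `(I)_τ = I + {0, …, τ-1}` of a finset `I ⊆ ℕ`. -/
def tauExt (τ : ℕ) (I : Finset ℕ) : Finset ℕ :=
  I.biUnion fun l => Finset.Ico l (l + τ)

/-- The density, in `[k]^{{0,…,n-1} ∖ (I)_τ}`, of the section of `A ∩ [k]^n` at the
located word `y ∈ [k]^{(I)_τ}` (encoded by a function `ℕ → Fin k`, only the values on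
`(I)_τ` being relevant). -/
noncomputable def secDensτ (k n τ : ℕ) (I : Finset ℕ) (y : ℕ → Fin k)
    (A : Set (Word k)) : ℝ :=
  (Set.ncard {x ∈ A | x.length = n ∧ ∀ i ∈ tauExt τ I, x[i]? = some (y i)} : ℝ) /
    (k : ℝ) ^ (n - (tauExt τ I).card)

/-- A family `F` of subsets of `[k]^{<ℕ}` is `(ε, τ, L)`-regular. -/
def RegularFamilyτ (k : ℕ) (ε : ℝ) (τ : ℕ) (L : Finset ℕ)
    (F : Finset (Set (Word k))) : Prop :=
  ∀ A ∈ F, ∀ n ∈ L, ∀ I : Finset ℕ, I ⊆ L.filter (· < n) → ∀ y : ℕ → Fin k,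
    |secDensτ k n τ I y A - dens k n A| ≤ ε

/-!
Choose the levels greedily from the top, with `δ = ε / ℓ`. Call a candidate level `l`, lying
below the set `L` chosen so far, stable if additionally fixing the block `[l, l + τ)` moves no
section density of a level of `L` by more than `δ`; adding stable levels one at a time keeps
every deviation `|secDensτ - dens|` below `δ · |I|`.

For fixed `A`, `n` and `I`, the density increments obtained by additionally fixing pairwise
disjoint blocks are orthogonal in `ℓ²([k]^n)`. An increment exceeding `δ` at one point exceeds
it on a whole fibre of size `k^(n - |(I)_τ| - τ)`, so Bessel's inequality allows at most
`k^(|I| τ + τ) / δ²` unstable blocks. Hence the number of unstable candidates is bounded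
independently of `N`, and a long enough sparse `N` contains `ℓ` stable levels.
-/

open Finset

theorem sum_norm_sq_le_of_orthogonal {ι E : Type*} [NormedAddCommGroup E]
    [InnerProductSpace ℝ E] (s : Finset ι) (g : E) (e : ι → E)
    (horth : ∀ i ∈ s, ∀ j ∈ s, i ≠ j → inner ℝ (e i) (e j) = 0)
    (hproj : ∀ i ∈ s, inner ℝ g (e i) = ‖e i‖ ^ 2) :
    ∑ i ∈ s, ‖e i‖ ^ 2 ≤ ‖g‖ ^ 2 := by
  have hinner : inner ℝ g (∑ i ∈ s, e i) = ∑ i ∈ s, ‖e i‖ ^ 2 := by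
    rw [inner_sum]; exact sum_congr rfl hproj
  have hpyth : ‖∑ i ∈ s, e i‖ ^ 2 = ∑ i ∈ s, ‖e i‖ ^ 2 := by
    rw [← real_inner_self_eq_norm_sq, sum_inner]
    refine sum_congr rfl fun i hi => ?_
    rw [inner_sum, sum_eq_single_of_mem i hi fun j hj hji => horth i hi j hj hji.symm,
      real_inner_self_eq_norm_sq]
  nlinarith [norm_sub_sq_real g (∑ i ∈ s, e i), sq_nonneg ‖g - ∑ i ∈ s, e i‖]

theorem card_filter_exists_le_sum {α β : Type*} [DecidableEq α] (s : Finset α) (t : Finset β)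
    (p : β → α → Prop) [∀ b, DecidablePred (p b)] [DecidablePred fun a => ∃ b ∈ t, p b a] :
    #{a ∈ s | ∃ b ∈ t, p b a} ≤ ∑ b ∈ t, #{a ∈ s | p b a} := by
  refine (card_le_card fun a ha => ?_).trans card_biUnion_le
  obtain ⟨has, b, hb, hab⟩ := mem_filter.1 ha
  exact mem_biUnion.2 ⟨b, hb, mem_filter.2 ⟨has, hab⟩⟩

open scoped Classical in
theorem exists_good_with_many_below {Good : ℕ → Prop} {M : Finset ℕ} {C j : ℕ}
    (hbad : #{m ∈ M | ¬ Good m} ≤ C) (hM : (C + 1) * (j + 1) ≤ #M) :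
    ∃ l ∈ M, Good l ∧ (C + 1) * j ≤ #{m ∈ M | m < l} := by
  set G := {m ∈ M | Good m} with hGdef
  have hG : (C + 1) * j + 1 ≤ #G := by
    have := card_filter_add_card_filter_not (s := M) fun m => Good m
    rw [← hGdef] at this
    rw [Nat.mul_succ] at hM
    omega
  obtain ⟨l, hlG, hlmax⟩ := G.exists_max_image id (card_pos.1 (by omega))
  obtain ⟨hlM, hlgood⟩ := mem_filter.1 hlG
  refine ⟨l, hlM, hlgood, ?_⟩
  have hbelow : G.erase l ⊆ {m ∈ M | m < l} := fun m hm => mem_filter.2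
    ⟨(mem_filter.1 (mem_of_mem_erase hm)).1,
      lt_of_le_of_ne (hlmax m (mem_of_mem_erase hm)) (ne_of_mem_erase hm)⟩
  have := card_le_card hbelow
  rw [card_erase_of_mem hlG] at this
  omega

open scoped Classical in
theorem exists_greedy_extension {P : Finset ℕ → Prop} {Good : Finset ℕ → ℕ → Prop}
    {N : Finset ℕ} {C ℓ : ℕ}
    (hstep : ∀ L l, (∀ x ∈ L, l < x) → P L → Good L l → P (insert l L))
    (hbad : ∀ L M, L ∪ M ⊆ N → (∀ m ∈ M, ∀ x ∈ L, m < x) → #L < ℓ →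
      #{m ∈ M | ¬ Good L m} ≤ C) :
    ∀ j L M, L ∪ M ⊆ N → (∀ m ∈ M, ∀ x ∈ L, m < x) → P L → #L + j ≤ ℓ →
      (C + 1) * j ≤ #M → ∃ L' ⊆ L ∪ M, #L' = #L + j ∧ P L' := by
  intro j
  induction j with
  | zero => exact fun L M _ _ hP _ _ => ⟨L, subset_union_left, rfl, hP⟩
  | succ j ih =>
    intro L M hN hML hP hℓ hM
    obtain ⟨l, hlM, hlgood, hM'⟩ :=
      exists_good_with_many_below (hbad L M hN hML (by omega)) hM
    have hlL : l ∉ L := fun h => lt_irrefl l (hML l hlM l h)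
    have hsub : insert l L ∪ {m ∈ M | m < l} ⊆ L ∪ M := by
      intro x hx
      simp only [mem_union, mem_insert, mem_filter] at hx ⊢
      rcases hx with (rfl | hx) | hx
      · exact Or.inr hlM
      · exact Or.inl hx
      · exact Or.inr hx.1
    obtain ⟨L', hL'sub, hL'card, hL'⟩ := ih (insert l L) _ (hsub.trans hN)
      (fun m hm x hx => by
        obtain ⟨hmM, hml⟩ := mem_filter.1 hm
        rcases mem_insert.1 hx with rfl | hx
        · exact hml
        · exact hML m hmM x hx)
      (hstep L l (fun x hx => hML l hlM x hx) hP hlgood)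
      (by rw [card_insert_of_notMem hlL]; omega) hM'
    exact ⟨L', hL'sub.trans hsub, by rw [hL'card, card_insert_of_notMem hlL]; ring, hL'⟩

theorem Sparse.mono {τ : ℕ} {L L' : Finset ℕ} (h : L ⊆ L') (hs : Sparse τ L') : Sparse τ L :=
  fun a ha b hb hab => hs a (h ha) b (h hb) hab

theorem Sparse.pairwiseDisjoint_Ico {τ : ℕ} {M : Finset ℕ} (hM : Sparse τ M) :
    (M : Set ℕ).PairwiseDisjoint fun m => Ico m (m + τ) := by
  intro a ha b hb hab
  simp only [Function.onFun, disjoint_left, mem_Ico]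
  rcases lt_or_gt_of_ne hab with h | h
  · have := hM a ha b hb h; omega
  · have := hM b hb a ha h; omega

@[simp]
theorem tauExt_empty (τ : ℕ) : tauExt τ ∅ = ∅ := by
  simp [tauExt]

theorem tauExt_insert (τ m : ℕ) (I : Finset ℕ) :
    tauExt τ (insert m I) = Ico m (m + τ) ∪ tauExt τ I := by
  rw [tauExt, tauExt, biUnion_insert]

theorem card_tauExt_le (τ : ℕ) (I : Finset ℕ) : #(tauExt τ I) ≤ #I * τ :=
  card_biUnion_le_card_mul _ _ _ fun l _ => by simp

theorem lt_of_mem_tauExt {τ n : ℕ} {I : Finset ℕ} (hI : ∀ j ∈ I, j + τ ≤ n) :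
    ∀ i ∈ tauExt τ I, i < n := by
  intro i hi
  obtain ⟨j, hj, hij⟩ := mem_biUnion.1 hi
  have := hI j hj
  rw [mem_Ico] at hij
  omega

theorem secDensτ_empty (k n τ : ℕ) (y : ℕ → Fin k) (A : Set (Word k)) :
    secDensτ k n τ ∅ y A = _root_.dens k n A := by
  simp [secDensτ, _root_.dens]

namespace SparseRegularity

variable {k n : ℕ}

def fiber (E : Finset (Fin n)) (p : Fin n → Fin k) : Finset (Fin n → Fin k) :=
  univ.filter fun x => ∀ i ∈ E, x i = p i

@[simp]
theorem mem_fiber {E : Finset (Fin n)} {p x : Fin n → Fin k} :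
    x ∈ fiber E p ↔ ∀ i ∈ E, x i = p i := by
  simp [fiber]

theorem self_mem_fiber (E : Finset (Fin n)) (p : Fin n → Fin k) : p ∈ fiber E p := by
  simp

theorem mem_fiber_comm {E : Finset (Fin n)} {p x : Fin n → Fin k} :
    x ∈ fiber E p ↔ p ∈ fiber E x := by
  simp only [mem_fiber]
  exact forall₂_congr fun _ _ => eq_comm

theorem mem_fiber_of_subset {E F : Finset (Fin n)} {p x : Fin n → Fin k} (hFE : F ⊆ E)
    (hx : x ∈ fiber E p) : x ∈ fiber F p := by
  simp only [mem_fiber] at hx ⊢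
  exact fun i hi => hx i (hFE hi)

theorem fiber_eq_of_mem {E : Finset (Fin n)} {p x : Fin n → Fin k} (hx : x ∈ fiber E p) :
    fiber E x = fiber E p := by
  ext z
  simp only [mem_fiber] at hx ⊢
  exact forall₂_congr fun i hi => by rw [hx i hi]

theorem card_fiber (E : Finset (Fin n)) (p : Fin n → Fin k) :
    #(fiber E p) = k ^ (n - #E) := by
  have hpi : fiber E p = Fintype.piFinset fun i => if i ∈ E then {p i} else univ := by
    ext x
    simp only [mem_fiber, Fintype.mem_piFinset]
    refine ⟨fun h i => ?_, fun h i hi => by simpa [hi] using h i⟩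
    split_ifs with hi
    · simp [h i hi]
    · exact mem_univ _
  simp only [hpi, Fintype.card_piFinset, apply_ite card, card_singleton, card_univ,
    Fintype.card_fin]
  rw [prod_ite, prod_const_one, one_mul, prod_const, filter_not,
    card_sdiff_of_subset (filter_subset _ _), card_univ, Fintype.card_fin, filter_mem_eq_inter,
    univ_inter]

theorem fiber_inter_fiber {E F : Finset (Fin n)} {p x : Fin n → Fin k}
    (hx : x ∈ fiber (E ∩ F) p) :
    fiber E p ∩ fiber F x = fiber (E ∪ F) fun i => if i ∈ E then p i else x i := by
  ext z
  simp only [mem_inter, mem_fiber, mem_union] at hx ⊢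
  constructor
  · rintro ⟨hE, hF⟩ i (hi | hi)
    · simp [hi, hE i hi]
    · by_cases hiE : i ∈ E
      · simp [hiE, hE i hiE]
      · simp [hiE, hF i hi]
  · intro h
    refine ⟨fun i hi => by simpa [hi] using h i (Or.inl hi), fun i hi => ?_⟩
    by_cases hiE : i ∈ E
    · simpa [hiE, hx i ⟨hiE, hi⟩] using h i (Or.inl hiE)
    · simpa [hiE] using h i (Or.inr hi)

theorem card_fiber_inter_fiber (E F : Finset (Fin n)) (p x : Fin n → Fin k) :
    #(fiber E p ∩ fiber F x) = if x ∈ fiber (E ∩ F) p then k ^ (n - #(E ∪ F)) else 0 := by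
  split_ifs with hx
  · rw [fiber_inter_fiber hx, card_fiber]
  · rw [card_eq_zero, eq_empty_iff_forall_notMem]
    intro z hz
    simp only [mem_inter, mem_fiber] at hz hx
    exact hx fun i hi => ((hz.1 i hi.1).symm.trans (hz.2 i hi.2)).symm

/-- The conditional expectation of `f` given the coordinates in `E`. -/
noncomputable def fiberAvg (E : Finset (Fin n)) (f : (Fin n → Fin k) → ℝ)
    (p : Fin n → Fin k) : ℝ :=
  (∑ x ∈ fiber E p, f x) / #(fiber E p)

theorem fiberAvg_eq (E : Finset (Fin n)) (f : (Fin n → Fin k) → ℝ) (p : Fin n → Fin k) :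
    fiberAvg E f p = (∑ x ∈ fiber E p, f x) / (k : ℝ) ^ (n - #E) := by
  rw [fiberAvg, card_fiber, Nat.cast_pow]

theorem fiberAvg_congr {E : Finset (Fin n)} (f : (Fin n → Fin k) → ℝ) {p x : Fin n → Fin k}
    (hx : x ∈ fiber E p) : fiberAvg E f x = fiberAvg E f p := by
  rw [fiberAvg, fiberAvg, fiber_eq_of_mem hx]

theorem sum_fiberAvg_mul (E : Finset (Fin n)) (f g : (Fin n → Fin k) → ℝ) :
    ∑ p, fiberAvg E f p * g p = ∑ p, f p * fiberAvg E g p := by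
  simp only [fiberAvg_eq, div_mul_eq_mul_div, mul_div_assoc', ← sum_div, sum_mul, mul_sum]
  congr 1
  exact sum_comm' fun p x => by simp only [mem_univ, and_true, true_and, mem_fiber_comm]

theorem fiberAvg_fiberAvg (E F : Finset (Fin n)) (f : (Fin n → Fin k) → ℝ) :
    fiberAvg E (fiberAvg F f) = fiberAvg (E ∩ F) f := by
  funext p
  have hpos : ∀ G : Finset (Fin n), (0 : ℝ) < (k : ℝ) ^ (n - #G) := fun G => by
    exact_mod_cast card_fiber G p ▸ card_pos.2 ⟨p, self_mem_fiber G p⟩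
  have hexp : (k : ℝ) ^ (n - #(E ∪ F)) * (k : ℝ) ^ (n - #(E ∩ F))
      = (k : ℝ) ^ (n - #E) * (k : ℝ) ^ (n - #F) := by
    rw [← pow_add, ← pow_add]
    have := card_union_add_card_inter E F
    have := card_le_card (inter_subset_left (s₁ := E) (s₂ := F))
    have := card_le_card (subset_union_left (s₁ := E) (s₂ := F))
    have := card_le_univ (E ∪ F)
    rw [Fintype.card_fin] at this
    congr 1
    omega
  have hswap : ∑ y ∈ fiber E p, ∑ x ∈ fiber F y, f x
      = (k : ℝ) ^ (n - #(E ∪ F)) * ∑ x ∈ fiber (E ∩ F) p, f x := by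
    rw [sum_comm' (t' := univ) (s' := fun x => fiber E p ∩ fiber F x) fun y x => by
      simp only [mem_inter, mem_univ, and_true]; rw [mem_fiber_comm (x := x)]]
    simp only [sum_const, card_fiber_inter_fiber, nsmul_eq_mul, Nat.cast_ite, Nat.cast_pow,
      Nat.cast_zero, ite_mul, zero_mul, sum_ite_mem, univ_inter, mul_sum]
  simp only [fiberAvg_eq, ← sum_div, hswap]
  rw [div_div, div_eq_div_iff (by have := hpos E; have := hpos F; positivity) (hpos _).ne']
  linear_combination (∑ x ∈ fiber (E ∩ F) p, f x) * hexp

theorem sum_fiberAvg_mul_fiberAvg (E F : Finset (Fin n)) (f : (Fin n → Fin k) → ℝ) :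
    ∑ p, fiberAvg E f p * fiberAvg F f p = ∑ p, f p * fiberAvg (E ∩ F) f p := by
  rw [sum_fiberAvg_mul, fiberAvg_fiberAvg]

theorem sum_fiberAvg_sub_mul_fiberAvg_sub {D G G' : Finset (Fin n)} (hG : D ⊆ G) (hG' : D ⊆ G')
    (f : (Fin n → Fin k) → ℝ) :
    ∑ p, (fiberAvg G f p - fiberAvg D f p) * (fiberAvg G' f p - fiberAvg D f p)
      = ∑ p, f p * fiberAvg (G ∩ G') f p - ∑ p, f p * fiberAvg D f p := by
  simp only [sub_mul, mul_sub, sum_sub_distrib, sum_fiberAvg_mul_fiberAvg, inter_eq_right.2 hG,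
    inter_eq_left.2 hG', inter_self]
  ring

/-- The increments are pairwise orthogonal because conditioning on `D ∪ E l` and then on
`D ∪ E l'` is conditioning on `D` alone. -/
theorem sum_sum_sq_fiberAvg_sub_le {ι : Type*} (D : Finset (Fin n)) (E : ι → Finset (Fin n))
    (S : Finset ι) (hE : (S : Set ι).PairwiseDisjoint E) (f : (Fin n → Fin k) → ℝ) :
    ∑ l ∈ S, ∑ p, (fiberAvg (D ∪ E l) f p - fiberAvg D f p) ^ 2 ≤ ∑ p, f p ^ 2 := by
  have hnorm : ∀ u : (Fin n → Fin k) → ℝ, ‖WithLp.toLp 2 u‖ ^ 2 = ∑ p, u p ^ 2 := fun u => by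
    simp [EuclideanSpace.real_norm_sq_eq]
  have hinner : ∀ u v : (Fin n → Fin k) → ℝ,
      inner ℝ (WithLp.toLp 2 u) (WithLp.toLp 2 v) = ∑ p, u p * v p := fun u v => by
    simp [EuclideanSpace.inner_toLp_toLp, dotProduct, mul_comm]
  have hsq : ∀ l, ∑ p, (fiberAvg (D ∪ E l) f p - fiberAvg D f p) ^ 2
      = ∑ p, f p * fiberAvg (D ∪ E l) f p - ∑ p, f p * fiberAvg D f p := fun l => by
    simp only [sq]
    rw [sum_fiberAvg_sub_mul_fiberAvg_sub subset_union_left subset_union_left, inter_self]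
  simp only [← hnorm]
  refine sum_norm_sq_le_of_orthogonal S _ _ (fun l hl l' hl' hll' => ?_) fun l _ => ?_
  · rw [hinner, sum_fiberAvg_sub_mul_fiberAvg_sub subset_union_left subset_union_left,
      ← union_inter_distrib_left, disjoint_iff_inter_eq_empty.1 (hE hl hl' hll'), union_empty,
      sub_self]
  · rw [hinner, hnorm, hsq]
    simp only [mul_sub, sum_sub_distrib]

theorem card_fiber_mul_sq_le_sum_sq {F : Finset (Fin n)} {g : (Fin n → Fin k) → ℝ}
    {p : Fin n → Fin k} (hg : ∀ x ∈ fiber F p, g x = g p) :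
    #(fiber F p) * g p ^ 2 ≤ ∑ x, g x ^ 2 := by
  calc #(fiber F p) * g p ^ 2 = ∑ x ∈ fiber F p, g x ^ 2 := by
        rw [sum_congr rfl fun x hx => by rw [hg x hx], sum_const, nsmul_eq_mul]
    _ ≤ ∑ x, g x ^ 2 :=
        sum_le_sum_of_subset_of_nonneg (subset_univ _) fun x _ _ => sq_nonneg (g x)

theorem card_large_increment_mul_sq_le (hk : 0 < k) {ι : Type*} (D : Finset (Fin n))
    (E : ι → Finset (Fin n)) (S : Finset ι) (hE : (S : Set ι).PairwiseDisjoint E) {τ : ℕ}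
    (hτ : ∀ l ∈ S, #(E l) ≤ τ) (f : (Fin n → Fin k) → ℝ) (hf : ∀ x, |f x| ≤ 1) {δ : ℝ}
    (hδ : 0 ≤ δ) :
    #{l ∈ S | ∃ p, δ < |fiberAvg (D ∪ E l) f p - fiberAvg D f p|} * δ ^ 2
      ≤ (k : ℝ) ^ (#D + τ) := by
  set T := {l ∈ S | ∃ p, δ < |fiberAvg (D ∪ E l) f p - fiberAvg D f p|}
  set m := n - (#D + τ)
  have hk1 : (1 : ℝ) ≤ k := by exact_mod_cast hk
  have hlarge : ∀ l ∈ T,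
      (k : ℝ) ^ m * δ ^ 2 ≤ ∑ p, (fiberAvg (D ∪ E l) f p - fiberAvg D f p) ^ 2 := by
    intro l hl
    obtain ⟨hlS, p, hp⟩ := mem_filter.1 hl
    have hconst := card_fiber_mul_sq_le_sum_sq (F := D ∪ E l)
      (g := fun x => fiberAvg (D ∪ E l) f x - fiberAvg D f x) (p := p) fun x hx => by
        rw [fiberAvg_congr f hx, fiberAvg_congr f (mem_fiber_of_subset subset_union_left hx)]
    refine le_trans ?_ hconst
    rw [card_fiber, Nat.cast_pow]
    refine mul_le_mul (pow_le_pow_right₀ hk1 ?_) ?_ (sq_nonneg δ) (by positivity)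
    · have := card_union_le D (E l)
      have := hτ l hlS
      omega
    · rw [← sq_abs (_ - _)]
      exact pow_le_pow_left₀ hδ hp.le 2
  have hf2 : ∑ p, f p ^ 2 ≤ (k : ℝ) ^ n := by
    calc ∑ p, f p ^ 2 ≤ ∑ _p : Fin n → Fin k, (1 : ℝ) :=
          sum_le_sum fun p _ => (sq_le_one_iff_abs_le_one _).2 (hf p)
      _ = (k : ℝ) ^ n := by simp
  have hbessel := sum_sum_sq_fiberAvg_sub_le D E T (hE.subset (filter_subset _ _)) f
  have hkn : (k : ℝ) ^ n ≤ (k : ℝ) ^ m * (k : ℝ) ^ (#D + τ) := by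
    rw [← pow_add]
    exact pow_le_pow_right₀ hk1 (by omega)
  refine le_of_mul_le_mul_left ?_ (by positivity : (0 : ℝ) < (k : ℝ) ^ m)
  calc (k : ℝ) ^ m * (#T * δ ^ 2) = ∑ _l ∈ T, (k : ℝ) ^ m * δ ^ 2 := by
        rw [sum_const, nsmul_eq_mul]; ring
    _ ≤ _ := (sum_le_sum hlarge).trans (hbessel.trans (hf2.trans hkn))

def finCoords (n : ℕ) (E : Finset ℕ) : Finset (Fin n) :=
  univ.filter fun i => (i : ℕ) ∈ E

theorem map_finCoords (n : ℕ) (E : Finset ℕ) :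
    (finCoords n E).map Fin.valEmbedding = E.filter (· < n) := by
  ext i
  simp only [finCoords, mem_map, mem_filter, mem_univ, true_and, Fin.valEmbedding_apply]
  exact ⟨fun ⟨j, hj, hji⟩ => hji ▸ ⟨hj, j.2⟩, fun ⟨hi, hin⟩ => ⟨⟨i, hin⟩, hi, rfl⟩⟩

theorem card_finCoords_le (n : ℕ) (E : Finset ℕ) : #(finCoords n E) ≤ #E := by
  rw [← card_map Fin.valEmbedding, map_finCoords]
  exact card_filter_le _ _

theorem card_finCoords {E : Finset ℕ} (hE : ∀ i ∈ E, i < n) :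
    #(finCoords n E) = #E := by
  rw [← card_map Fin.valEmbedding, map_finCoords, filter_true_of_mem hE]

theorem finCoords_union (n : ℕ) (E F : Finset ℕ) :
    finCoords n (E ∪ F) = finCoords n E ∪ finCoords n F := by
  simp only [finCoords, mem_union, filter_or]

theorem disjoint_finCoords {E F : Finset ℕ} (h : Disjoint E F) :
    Disjoint (finCoords n E) (finCoords n F) := by
  simp only [finCoords, disjoint_left, mem_filter, mem_univ, true_and]
  exact fun i hE hF => disjoint_left.1 h hE hF

open scoped Classical in
noncomputable def levelIndicator (A : Set (Word k)) (n : ℕ) : (Fin n → Fin k) → ℝ :=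
  fun x => if List.ofFn x ∈ A then 1 else 0

theorem abs_levelIndicator_le_one (A : Set (Word k)) (n : ℕ) (x : Fin n → Fin k) :
    |levelIndicator A n x| ≤ 1 := by
  unfold levelIndicator; split_ifs <;> simp

open scoped Classical in
theorem secDensτ_eq_fiberAvg {τ : ℕ} {I : Finset ℕ} (hI : ∀ i ∈ tauExt τ I, i < n)
    (y : ℕ → Fin k) (A : Set (Word k)) :
    secDensτ k n τ I y A
      = fiberAvg (finCoords n (tauExt τ I)) (levelIndicator A n) fun j => y j := by
  rw [secDensτ, fiberAvg_eq, card_finCoords hI]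
  congr 1
  have hset : {x ∈ A | x.length = n ∧ ∀ i ∈ tauExt τ I, x[i]? = some (y i)}
      = ↑(((fiber (finCoords n (tauExt τ I)) fun j => y j).filter
          fun x => List.ofFn x ∈ A).image List.ofFn) := by
    ext z
    simp only [Set.mem_ofPred_eq, coe_image, coe_filter, Set.mem_image,
      mem_fiber, finCoords, mem_filter, mem_univ, true_and]
    constructor
    · rintro ⟨hzA, rfl, hz⟩
      refine ⟨z.get, ⟨fun i hi => ?_, by rwa [List.ofFn_get]⟩, List.ofFn_get z⟩
      simpa [List.getElem?_eq_getElem i.2] using hz i hi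
    · rintro ⟨x, ⟨hx, hxA⟩, rfl⟩
      refine ⟨hxA, List.length_ofFn, fun i hi => ?_⟩
      simp [hI i hi, hx ⟨i, hI i hi⟩ hi]
  rw [hset, Set.ncard_coe_finset, card_image_of_injective _ List.ofFn_injective, card_filter]
  simp [levelIndicator]

open scoped Classical in
theorem card_large_secDensτ_increment_mul_sq_le {τ : ℕ} (hk : 0 < k) {I M : Finset ℕ}
    (hI : ∀ j ∈ I, j + τ ≤ n) (hM : ∀ m ∈ M, m + τ ≤ n) (hMs : Sparse τ M)
    (A : Set (Word k)) {δ : ℝ} (hδ : 0 ≤ δ) :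
    #{m ∈ M | ∃ y : ℕ → Fin k,
        δ < |secDensτ k n τ (insert m I) y A - secDensτ k n τ I y A|} * δ ^ 2
      ≤ (k : ℝ) ^ (#I * τ + τ) := by
  set D := finCoords n (tauExt τ I)
  set E : ℕ → Finset (Fin n) := fun m => finCoords n (Ico m (m + τ))
  have hsub : {m ∈ M | ∃ y : ℕ → Fin k,
        δ < |secDensτ k n τ (insert m I) y A - secDensτ k n τ I y A|}
      ⊆ {m ∈ M | ∃ p, δ < |fiberAvg (D ∪ E m) (levelIndicator A n) p
          - fiberAvg D (levelIndicator A n) p|} := by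
    intro m hm
    obtain ⟨hmM, y, hy⟩ := mem_filter.1 hm
    have hIm : ∀ j ∈ insert m I, j + τ ≤ n := by
      simpa only [forall_mem_insert] using ⟨hM m hmM, hI⟩
    rw [secDensτ_eq_fiberAvg (lt_of_mem_tauExt hIm), secDensτ_eq_fiberAvg (lt_of_mem_tauExt hI),
      tauExt_insert, finCoords_union, union_comm] at hy
    exact mem_filter.2 ⟨hmM, _, hy⟩
  have hE : (M : Set ℕ).PairwiseDisjoint E := fun a ha b hb hab =>
    disjoint_finCoords (hMs.pairwiseDisjoint_Ico ha hb hab)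
  have hD : #D ≤ #I * τ := (card_finCoords_le _ _).trans (card_tauExt_le τ I)
  calc (#{m ∈ M | ∃ y : ℕ → Fin k,
          δ < |secDensτ k n τ (insert m I) y A - secDensτ k n τ I y A|} : ℝ) * δ ^ 2
      ≤ #{m ∈ M | ∃ p, δ < |fiberAvg (D ∪ E m) (levelIndicator A n) p
          - fiberAvg D (levelIndicator A n) p|} * δ ^ 2 := by
        gcongr
    _ ≤ (k : ℝ) ^ (#D + τ) :=
        card_large_increment_mul_sq_le hk D E M hE (fun m _ => (card_finCoords_le _ _).trans
          (by simp)) _ (abs_levelIndicator_le_one A n) hδ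
    _ ≤ (k : ℝ) ^ (#I * τ + τ) := pow_le_pow_right₀ (by exact_mod_cast hk) (by omega)

def IsStable (k τ : ℕ) (δ : ℝ) (F : Finset (Set (Word k))) (L : Finset ℕ) (l : ℕ) : Prop :=
  ∀ A ∈ F, ∀ n ∈ L, ∀ I ⊆ L.filter (· < n), ∀ y : ℕ → Fin k,
    |secDensτ k n τ (insert l I) y A - secDensτ k n τ I y A| ≤ δ

def LinearlyRegular (k τ : ℕ) (δ : ℝ) (F : Finset (Set (Word k))) (L : Finset ℕ) : Prop :=
  ∀ A ∈ F, ∀ n ∈ L, ∀ I ⊆ L.filter (· < n), ∀ y : ℕ → Fin k,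
    |secDensτ k n τ I y A - _root_.dens k n A| ≤ δ * #I

theorem LinearlyRegular.insert {τ : ℕ} {δ : ℝ} {F : Finset (Set (Word k))} {L : Finset ℕ}
    {l : ℕ} (hl : ∀ x ∈ L, l < x) (hL : LinearlyRegular k τ δ F L)
    (hstab : IsStable k τ δ F L l) : LinearlyRegular k τ δ F (insert l L) := by
  intro A hA n hn I hI y
  rcases mem_insert.1 hn with rfl | hnL
  · have hIe : I = ∅ := subset_empty.1 fun j hj => by
      obtain ⟨hjL, hjn⟩ := mem_filter.1 (hI hj)
      rcases mem_insert.1 hjL with rfl | hjL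
      · exact absurd hjn (lt_irrefl j)
      · exact absurd (hl j hjL) hjn.not_gt
    simp [hIe, secDensτ_empty]
  · have hI' : I.erase l ⊆ L.filter (· < n) := by
      rw [← subset_insert_iff]
      rwa [filter_insert, if_pos (hl n hnL)] at hI
    by_cases hlI : l ∈ I
    · have hstep := hstab A hA n hnL _ hI' y
      rw [insert_erase hlI] at hstep
      have hcard : (#I : ℝ) = #(I.erase l) + 1 := by
        rw [card_erase_of_mem hlI, Nat.cast_sub (card_pos.2 ⟨l, hlI⟩)]; ring
      calc |secDensτ k n τ I y A - _root_.dens k n A|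
          ≤ |secDensτ k n τ I y A - secDensτ k n τ (I.erase l) y A|
            + |secDensτ k n τ (I.erase l) y A - _root_.dens k n A| := abs_sub_le _ _ _
        _ ≤ δ + δ * #(I.erase l) := add_le_add hstep (hL A hA n hnL _ hI' y)
        _ = δ * #I := by rw [hcard]; ring
    · rw [erase_eq_of_notMem hlI] at hI'
      exact hL A hA n hnL I hI' y

open scoped Classical in
theorem card_not_isStable_le_sum {τ : ℕ} {δ : ℝ} (F : Finset (Set (Word k))) (L M : Finset ℕ) :
    #{m ∈ M | ¬ IsStable k τ δ F L m}
      ≤ ∑ A ∈ F, ∑ n ∈ L, ∑ I ∈ (L.filter (· < n)).powerset, #{m ∈ M | ∃ y : ℕ → Fin k,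
          δ < |secDensτ k n τ (insert m I) y A - secDensτ k n τ I y A|} := by
  refine (card_le_card (monotone_filter_right _ fun m _ hm => ?_)).trans <|
    (card_filter_exists_le_sum _ F _).trans <| sum_le_sum fun A _ =>
      (card_filter_exists_le_sum _ L _).trans <| sum_le_sum fun n _ =>
        card_filter_exists_le_sum _ _ _
  simp only [IsStable, not_forall, not_le, exists_prop] at hm
  obtain ⟨A, hA, n, hn, I, hI, y, hy⟩ := hm
  exact ⟨A, hA, n, hn, I, mem_powerset.2 hI, y, hy⟩

open scoped Classical in
theorem card_not_isStable_le {τ ℓ : ℕ} (hk : 0 < k) {δ : ℝ} (hδ : 0 < δ)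
    (F : Finset (Set (Word k))) {L M : Finset ℕ} (hsp : Sparse τ (M ∪ L))
    (hML : ∀ m ∈ M, ∀ x ∈ L, m < x) (hL : #L ≤ ℓ) :
    #{m ∈ M | ¬ IsStable k τ δ F L m} ≤ ⌈#F * ℓ * 2 ^ ℓ * (k : ℝ) ^ (ℓ * τ + τ) / δ ^ 2⌉₊ := by
  have hterm : ∀ n ∈ L, ∀ I ∈ (L.filter (· < n)).powerset, ∀ A : Set (Word k),
      #{m ∈ M | ∃ y : ℕ → Fin k,
        δ < |secDensτ k n τ (insert m I) y A - secDensτ k n τ I y A|} * δ ^ 2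
        ≤ (k : ℝ) ^ (ℓ * τ + τ) := by
    intro n hn I hI A
    have hI : ∀ j ∈ I, j ∈ L ∧ j < n := fun j hj => mem_filter.1 (mem_powerset.1 hI hj)
    have hIℓ : #I * τ ≤ ℓ * τ :=
      Nat.mul_le_mul_right τ ((card_le_card fun j hj => (hI j hj).1).trans hL)
    refine (card_large_secDensτ_increment_mul_sq_le hk (fun j hj => ?_) (fun m hm => ?_)
      (hsp.mono subset_union_left) A hδ.le).trans
      (pow_le_pow_right₀ (by exact_mod_cast hk) (by omega))
    · exact hsp j (mem_union_right _ (hI j hj).1) n (mem_union_right _ hn) (hI j hj).2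
    · exact hsp m (mem_union_left _ hm) n (mem_union_right _ hn) (hML m hm n hn)
  have hpow : ∀ n, (#(L.filter (· < n)).powerset : ℝ) ≤ 2 ^ ℓ := fun n => by
    rw [card_powerset, Nat.cast_pow, Nat.cast_two]
    exact pow_le_pow_right₀ one_le_two ((card_filter_le _ _).trans hL)
  refine Nat.cast_le.1 (le_trans ?_ (Nat.le_ceil _))
  rw [le_div_iff₀ (by positivity)]
  calc _ ≤ (∑ A ∈ F, ∑ n ∈ L, ∑ I ∈ (L.filter (· < n)).powerset, #{m ∈ M | ∃ y : ℕ → Fin k,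
          δ < |secDensτ k n τ (insert m I) y A - secDensτ k n τ I y A|} : ℕ) * δ ^ 2 := by
        gcongr
        exact card_not_isStable_le_sum F L M
    _ ≤ ∑ _A ∈ F, ∑ n ∈ L, ∑ _I ∈ (L.filter (· < n)).powerset, (k : ℝ) ^ (ℓ * τ + τ) := by
        push_cast
        simp only [sum_mul]
        exact sum_le_sum fun A _ => sum_le_sum fun n hn => sum_le_sum fun I hI =>
          hterm n hn I hI A
    _ ≤ ∑ _A ∈ F, ∑ _n ∈ L, (2 : ℝ) ^ ℓ * (k : ℝ) ^ (ℓ * τ + τ) := by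
        gcongr with A _ n
        rw [sum_const, nsmul_eq_mul]
        gcongr
        exact hpow n
    _ ≤ #F * ℓ * 2 ^ ℓ * (k : ℝ) ^ (ℓ * τ + τ) := by
        simp only [sum_const, nsmul_eq_mul, ← mul_assoc]
        gcongr

theorem LinearlyRegular.regularFamilyτ {τ : ℕ} {ε : ℝ} (hε : 0 ≤ ε)
    {F : Finset (Set (Word k))} {L : Finset ℕ} (hL : LinearlyRegular k τ (ε / #L) F L) :
    RegularFamilyτ k ε τ L F := by
  intro A hA n hn I hI y
  have hIL : (#I : ℝ) ≤ #L := by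
    exact_mod_cast card_le_card (hI.trans (filter_subset _ _))
  calc |secDensτ k n τ I y A - _root_.dens k n A| ≤ ε / #L * #I := hL A hA n hn I hI y
    _ ≤ ε / #L * #L := by gcongr
    _ = ε := div_mul_cancel₀ ε (by exact_mod_cast (card_pos.2 ⟨n, hn⟩).ne')

end SparseRegularity

open SparseRegularity in
theorem sparse_regularity_lemma_general (ε : ℝ) (hε0 : 0 < ε) (k ℓ q τ : ℕ)
    (hk : 2 ≤ k) (hℓ : 1 ≤ ℓ) :
    ∃ n : ℕ, ∀ N : Finset ℕ, Sparse τ N → n ≤ N.card →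
      ∀ F : Finset (Set (Word k)), F.card = q →
        ∃ L : Finset ℕ, L ⊆ N ∧ L.card = ℓ ∧ RegularFamilyτ k ε τ L F := by
  classical
  have hδ : 0 < ε / ℓ := div_pos hε0 (by exact_mod_cast hℓ)
  refine ⟨(⌈q * ℓ * 2 ^ ℓ * (k : ℝ) ^ (ℓ * τ + τ) / (ε / ℓ) ^ 2⌉₊ + 1) * ℓ,
    fun N hN hNcard F hF => ?_⟩
  obtain ⟨L, hLN, hLcard, hL⟩ := exists_greedy_extension (P := LinearlyRegular k τ (ε / ℓ) F)
    (fun L l hl hL hstab => hL.insert hl hstab)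
    (fun L M hLM hML hLℓ => hF ▸ card_not_isStable_le (by omega) hδ F
      (hN.mono (union_comm L M ▸ hLM)) hML hLℓ.le)
    ℓ ∅ N (by simp) (by simp) (fun A _ n hn => absurd hn (notMem_empty n)) (by simp) hNcard
  rw [empty_union] at hLN
  rw [card_empty, zero_add] at hLcard
  exact ⟨L, hLN, hLcard, (hLcard ▸ hL).regularFamilyτ hε0.le⟩

/-- Lemma 11.4: the regularity lemma for `τ`-sparse sets of levels. -/
theorem sparse_regularity_lemma (ε : ℝ) (hε0 : 0 < ε) (hε1 : ε ≤ 1) (k ℓ q τ : ℕ)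
    (hk : 2 ≤ k) (hℓ : 1 ≤ ℓ) (hq : 1 ≤ q) (hτ : 1 ≤ τ) :
    ∃ n : ℕ, ∀ N : Finset ℕ, Sparse τ N → n ≤ N.card →
      ∀ F : Finset (Set (Word k)), F.card = q →
        ∃ L : Finset ℕ, L ⊆ N ∧ L.card = ℓ ∧ RegularFamilyτ k ε τ L F :=
  sparse_regularity_lemma_general ε hε0 k ℓ q τ hk hℓ
end
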